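/- arXiv:2402.05590 — 6 statements merged into one kernel-verified Lean document; each statement's English description precedes it below -/
import Mathlib

section
/- The probability that there exists an index i ∈ {1,…,n} with |(Ξₙ)_{ii}| > (log n)^{−5} converges to 0 as n → ∞. -/
open MeasureTheory ProbabilityTheory Filter

/-- **Lemma 2.1 (1): diagonal elements.** The probability that some diagonal entry of Ξₙ exceeds (log n)⁻⁵ in absolute value tends to 0. -/
theorem sparse_wigner_diagonal_small
    {Ω : Type*} [MeasurableSpace Ω] (P : Measure Ω) [IsProbabilityMeasure P]
    (μ c : ℝ) (hμ0 : 0 < μ) (hμ1 : μ ≤ 1) (hc : 0 < c)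
    (p : ℕ → ℝ) (hp : ∀ n : ℕ, p n = (n : ℝ) ^ μ)
    -- the random variables a_{ij} and the Bernoulli variables b_{ij}
    (a b : (n : ℕ) → Fin n → Fin n → Ω → ℝ)
    (ha_meas : ∀ n (i j : Fin n), Measurable (a n i j))
    (hb_meas : ∀ n (i j : Fin n), Measurable (b n i j))
    (ha_symm : ∀ n (i j : Fin n), a n i j = a n j i)
    (hb_symm : ∀ n (i j : Fin n), b n i j = b n j i)
    -- the a_{ij}, i ≤ j, are identically distributed with common law ν
    (ν : Measure ℝ) [IsProbabilityMeasure ν]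
    (ha_law : ∀ n (i j : Fin n), i ≤ j → Measure.map (a n i j) P = ν)
    -- the law ν is symmetric, centered, with unit variance and tail index 2(1+1/μ)
    (hν_symm : Measure.map (fun x : ℝ => -x) ν = ν)
    (hν_mean : ∫ x, x ∂ν = 0)
    (hν_var : ∫ x, x ^ 2 ∂ν = 1)
    (hν_tail : Tendsto (fun x : ℝ => x ^ (2 * (1 + 1 / μ)) * (ν {y : ℝ | x < |y|}).toReal)
      atTop (nhds c))
    -- the b_{ij}, i ≤ j, are Bernoulli(pₙ/n)
    (hb_val : ∀ n (i j : Fin n) (ω : Ω), b n i j ω = 0 ∨ b n i j ω = 1)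
    (hb_law : ∀ (n : ℕ) (i j : Fin n), i ≤ j →
      (P {ω | b n i j ω = 1}).toReal = p n / n)
    -- joint independence of the (upper-triangular) a-entries and b-entries
    (hindep : ∀ n : ℕ, iIndepFun
      (Sum.elim (fun (q : {q : Fin n × Fin n // q.1 ≤ q.2}) => a n q.1.1 q.1.2)
                (fun (q : {q : Fin n × Fin n // q.1 ≤ q.2}) => b n q.1.1 q.1.2)) P)
    -- the matrix Ξₙ
    (Xi : (n : ℕ) → Ω → Matrix (Fin n) (Fin n) ℝ)
    (hXi : ∀ n (ω : Ω) (i j : Fin n), Xi n ω i j = b n i j ω * a n i j ω / Real.sqrt (p n))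
    :
    Tendsto (fun n : ℕ =>
      (P {ω | ∃ i : Fin n, (Real.log n) ^ (-(5:ℤ)) < |Xi n ω i i|}).toReal)
      atTop (nhds 0) := by

  have hμ_ne : μ ≠ 0 := ne_of_gt hμ0
  set α : ℝ := 2 * (1 + 1 / μ) with hα_def
  have hα_pos : 0 < α := by positivity
  -- tail bound threshold
  obtain ⟨x₁, hx₁⟩ : ∃ x₁ : ℝ, ∀ x ≥ x₁,
      x ^ α * (ν {y : ℝ | x < |y|}).toReal ≤ c + 1 := by
    have h := hν_tail.eventually (eventually_le_nhds (show c < c + 1 by linarith))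
    exact eventually_atTop.mp h
  set x₀ : ℝ := max x₁ 1 with hx₀_def
  have hx₀_pos : (0:ℝ) < x₀ := lt_of_lt_of_le one_pos (le_max_right _ _)
  have hx₀ : ∀ x ≥ x₀, x ^ α * (ν {y : ℝ | x < |y|}).toReal ≤ c + 1 :=
    fun x hx => hx₁ x (le_trans (le_max_left _ _) hx)
  set k : ℕ := ⌈5 * α⌉₊ with hk_def
  have hkα : 5 * α ≤ (k : ℝ) := Nat.le_ceil _
  -- eventual facts
  have evL : ∀ᶠ n : ℕ in atTop, 1 ≤ Real.log n :=
    (Real.tendsto_log_atTop.comp tendsto_natCast_atTop_atTop).eventually_ge_atTop 1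
  have evn : ∀ᶠ n : ℕ in atTop, 1 ≤ n := eventually_ge_atTop 1
  have evs : ∀ᶠ n : ℕ in atTop, x₀ * Real.log n ^ (5:ℕ) ≤ (n:ℝ) ^ (μ/2) := by
    have h := (isLittleO_log_rpow_rpow_atTop 5 (half_pos hμ0)).comp_tendsto
      (tendsto_natCast_atTop_atTop (R := ℝ))
    filter_upwards [h.def (by positivity : (0:ℝ) < x₀⁻¹), evL] with n hn hL
    simp only [Function.comp, Real.norm_eq_abs] at hn
    have hL0 : (0:ℝ) ≤ Real.log n := le_trans zero_le_one hL
    rw [abs_of_nonneg (Real.rpow_nonneg hL0 _),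
      abs_of_nonneg (Real.rpow_nonneg (Nat.cast_nonneg n) _)] at hn
    have h5 : Real.log n ^ (5:ℕ) = Real.log n ^ ((5:ℕ):ℝ) := (Real.rpow_natCast _ 5).symm
    rw [h5]
    calc x₀ * Real.log n ^ ((5:ℕ):ℝ)
        ≤ x₀ * (x₀⁻¹ * (n:ℝ) ^ (μ/2)) := by
          exact mul_le_mul_of_nonneg_left (by exact_mod_cast hn) hx₀_pos.le
      _ = (n:ℝ) ^ (μ/2) := by field_simp
  -- the key eventual bound
  have key : ∀ᶠ n : ℕ in atTop,
      (P {ω | ∃ i : Fin n, (Real.log n) ^ (-(5:ℤ)) < |Xi n ω i i|}).toReal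
        ≤ (c + 1) * (Real.log n ^ k / n) := by
    filter_upwards [evL, evn, evs] with n hL hn hs
    set L : ℝ := Real.log n with hLdef
    have hL0 : (0:ℝ) < L := lt_of_lt_of_le one_pos hL
    have hn0 : (0:ℝ) < (n:ℝ) := by exact_mod_cast Nat.lt_of_lt_of_le Nat.zero_lt_one hn
    have hpn : (0:ℝ) < p n := by rw [hp]; positivity
    have hsq : (0:ℝ) < Real.sqrt (p n) := Real.sqrt_pos.mpr hpn
    set t : ℝ := L ^ (-(5:ℤ)) with ht_def
    have ht_eq : t = (L ^ (5:ℕ))⁻¹ := by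
      rw [ht_def, zpow_neg]; norm_cast
    have ht0 : 0 < t := by rw [ht_eq]; positivity
    set s : ℝ := t * Real.sqrt (p n) with hs_def
    have hs0 : 0 < s := mul_pos ht0 hsq
    have hsqrt : Real.sqrt (p n) = (n:ℝ) ^ (μ/2) := by
      rw [hp n, Real.sqrt_eq_rpow, ← Real.rpow_mul (Nat.cast_nonneg n), mul_one_div]
    have hs_ge : x₀ ≤ s := by
      rw [hs_def, ht_eq, hsqrt, inv_mul_eq_div, le_div_iff₀ (by positivity)]
      exact hs
    have hT : (ν {y : ℝ | s < |y|}).toReal ≤ (c + 1) / s ^ α := by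
      rw [le_div_iff₀ (by positivity)]
      rw [mul_comm]
      exact hx₀ s hs_ge
    set A : Set ℝ := {x : ℝ | s < |x|} with hA_def
    have hA_meas : MeasurableSet A := measurableSet_lt measurable_const measurable_id.abs
    set S : Fin n → Set Ω := fun i => a n i i ⁻¹' A ∩ b n i i ⁻¹' {1} with hS_def
    have hsub : {ω | ∃ i : Fin n, t < |Xi n ω i i|} ⊆ ⋃ i, S i := by
      rintro ω ⟨i, hi⟩
      rw [hXi n ω i i] at hi
      rcases hb_val n i i ω with h0 | h1
      · rw [h0] at hi; simp at hi; linarith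
      · refine Set.mem_iUnion.mpr ⟨i, ?_, h1⟩
        rw [h1, one_mul, abs_div, abs_of_nonneg (Real.sqrt_nonneg _),
          lt_div_iff₀ hsq] at hi
        exact hi
    have hPS : ∀ i : Fin n, (P (S i)).toReal = (ν A).toReal * (p n / n) := by
      intro i
      have hij : (Sum.inl ⟨(i, i), le_refl i⟩ :
          {q : Fin n × Fin n // q.1 ≤ q.2} ⊕ {q : Fin n × Fin n // q.1 ≤ q.2}) ≠
          Sum.inr ⟨(i, i), le_refl i⟩ := Sum.inl_ne_inr
      have hind : IndepFun (a n i i) (b n i i) P := (hindep n).indepFun hij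
      have hmul := hind.measure_inter_preimage_eq_mul A {1} hA_meas
        (measurableSet_singleton 1)
      rw [hS_def]
      simp only []
      rw [hmul, ENNReal.toReal_mul]
      congr 1
      · rw [← ha_law n i i (le_refl i), Measure.map_apply (ha_meas n i i) hA_meas]
      · have hpre : b n i i ⁻¹' {1} = {ω | b n i i ω = 1} := rfl
        rw [hpre, hb_law n i i (le_refl i)]
    have hPE : (P {ω | ∃ i : Fin n, t < |Xi n ω i i|}).toReal
        ≤ ∑ i : Fin n, (P (S i)).toReal := by
      rw [← ENNReal.toReal_sum (fun i _ => measure_ne_top P _)]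
      refine ENNReal.toReal_mono ?_ ?_
      · exact (ENNReal.sum_lt_top.mpr (fun i _ => measure_lt_top P _)).ne
      · exact le_trans (measure_mono hsub)
          (le_trans (measure_iUnion_le S) (le_of_eq (tsum_fintype _)))
    have hexp : μ / 2 * α = μ + 1 := by rw [hα_def]; field_simp
    have hsα : s ^ α = (n:ℝ) ^ (μ + 1) / L ^ (5 * α) := by
      rw [hs_def, ht_eq, hsqrt, Real.mul_rpow (by positivity) (by positivity),
        ← Real.rpow_natCast L 5, ← Real.rpow_neg_one (L ^ ((5:ℕ):ℝ))]
      rw [← Real.rpow_mul hL0.le, ← Real.rpow_mul hL0.le, ← Real.rpow_mul (Nat.cast_nonneg n),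
        hexp]
      rw [show ((5:ℕ):ℝ) * -1 * α = -(5 * α) by push_cast; ring,
        Real.rpow_neg hL0.le, inv_mul_eq_div]
    have hLk : L ^ (5 * α) ≤ L ^ k := by
      rw [← Real.rpow_natCast L k]
      exact Real.rpow_le_rpow_of_exponent_le hL hkα
    have hfinal : p n / s ^ α ≤ L ^ k / n := by
      rw [hp n, hsα, div_div_eq_mul_div, div_le_div_iff₀ (by positivity) hn0,
        Real.rpow_add hn0, Real.rpow_one]
      calc (n:ℝ) ^ μ * L ^ (5 * α) * (n:ℝ)
          = L ^ (5 * α) * ((n:ℝ) ^ μ * (n:ℝ)) := by ring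
        _ ≤ L ^ k * ((n:ℝ) ^ μ * (n:ℝ)) :=
            mul_le_mul_of_nonneg_right hLk (by positivity)
    calc (P {ω | ∃ i : Fin n, t < |Xi n ω i i|}).toReal
        ≤ ∑ i : Fin n, (P (S i)).toReal := hPE
      _ = (n:ℝ) * ((ν A).toReal * (p n / n)) := by
          simp [hPS, Finset.sum_const, Finset.card_univ, nsmul_eq_mul]
      _ = (ν A).toReal * p n := by field_simp
      _ ≤ ((c + 1) / s ^ α) * p n := mul_le_mul_of_nonneg_right hT hpn.le
      _ = (c + 1) * (p n / s ^ α) := by ring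
      _ ≤ (c + 1) * (L ^ k / n) :=
          mul_le_mul_of_nonneg_left hfinal (by linarith)
  have hg : Tendsto (fun n : ℕ => (c + 1) * (Real.log n ^ k / n)) atTop (nhds 0) := by
    have h := (Real.tendsto_pow_log_div_mul_add_atTop 1 0 k one_ne_zero).comp
      (tendsto_natCast_atTop_atTop (R := ℝ))
    have h2 : Tendsto (fun n : ℕ => Real.log n ^ k / n) atTop (nhds 0) := by
      simpa [Function.comp_def] using h
    simpa using h2.const_mul (c + 1)
  exact squeeze_zero' (Eventually.of_forall fun n => ENNReal.toReal_nonneg) key hg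
end

section
/- The probability that there exist an index i ∈ {1,…,n} and two distinct indices j ≠ k in {1,…,n} with |(Ξₙ)_{ij}| > (log n)^{−5} and |(Ξₙ)_{ik}| > (log n)^{−5} converges to 0 as n → ∞. -/
open MeasureTheory ProbabilityTheory Filter
open scoped ENNReal NNReal


lemma swos_tail_bound (ν : Measure ℝ) [IsProbabilityMeasure ν] {α c : ℝ} (hα : 0 < α) (hc : 0 < c)
    (h : Tendsto (fun x : ℝ => x ^ α * (ν {y : ℝ | x < |y|}).toReal) atTop (nhds c)) :
    ∃ C : ℝ, 0 < C ∧ ∀ x : ℝ, 1 ≤ x → (ν {y : ℝ | x < |y|}).toReal ≤ C * x ^ (-α) := by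
  have hev : ∀ᶠ x : ℝ in atTop, x ^ α * (ν {y : ℝ | x < |y|}).toReal ≤ c + 1 :=
    h.eventually_le_const (lt_add_one c)
  obtain ⟨x₀, hx₀⟩ := (hev.and (eventually_ge_atTop (1:ℝ))).exists_forall_of_atTop
  refine ⟨max (c+1) ((max x₀ 1) ^ α), lt_max_of_lt_left (by linarith), fun x hx => ?_⟩
  have hxpos : (0:ℝ) < x := lt_of_lt_of_le one_pos hx
  have hxa : (0:ℝ) < x ^ (-α) := Real.rpow_pos_of_pos hxpos _
  rcases le_total (max x₀ 1) x with hcase | hcase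
  · have h1 := (hx₀ x (le_trans (le_max_left _ _) hcase)).1
    have hxx : x ^ α * x ^ (-α) = 1 := by
      rw [← Real.rpow_add hxpos]; simp
    have : (ν {y : ℝ | x < |y|}).toReal ≤ (c+1) * x ^ (-α) := by
      have h2 := mul_le_mul_of_nonneg_right h1 hxa.le
      calc (ν {y : ℝ | x < |y|}).toReal
          = (x ^ α * x ^ (-α)) * (ν {y : ℝ | x < |y|}).toReal := by rw [hxx, one_mul]
        _ = x ^ α * (ν {y : ℝ | x < |y|}).toReal * x ^ (-α) := by ring
        _ ≤ (c+1) * x ^ (-α) := h2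
    exact this.trans (mul_le_mul_of_nonneg_right (le_max_left _ _) hxa.le)
  · have h1 : (ν {y : ℝ | x < |y|}).toReal ≤ 1 := by
      have := prob_le_one (μ := ν) (s := {y : ℝ | x < |y|})
      simpa using ENNReal.toReal_le_of_le_ofReal one_pos.le (by simpa using this)
    have h2 : (1:ℝ) ≤ (max x₀ 1) ^ α * x ^ (-α) := by
      have hxle : x ^ α ≤ (max x₀ 1) ^ α :=
        Real.rpow_le_rpow hxpos.le hcase hα.le
      have hxx : x ^ α * x ^ (-α) = 1 := by rw [← Real.rpow_add hxpos]; simp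
      calc (1:ℝ) = x ^ α * x ^ (-α) := hxx.symm
        _ ≤ (max x₀ 1) ^ α * x ^ (-α) := mul_le_mul_of_nonneg_right hxle hxa.le
    calc (ν {y : ℝ | x < |y|}).toReal ≤ 1 := h1
      _ ≤ (max x₀ 1) ^ α * x ^ (-α) := h2
      _ ≤ max (c+1) ((max x₀ 1) ^ α) * x ^ (-α) :=
          mul_le_mul_of_nonneg_right (le_max_right _ _) hxa.le

lemma swos_log_div (β : ℝ) :
    Tendsto (fun n : ℕ => (Real.log n) ^ β / (n:ℝ)) atTop (nhds 0) := by
  have hN := Nat.le_ceil β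
  set N := ⌈β⌉₊ with hNdef
  have hg : Tendsto (fun n : ℕ => (Real.log n) ^ N / (1 * (n:ℝ) + 0)) atTop (nhds 0) :=
    (Real.tendsto_pow_log_div_mul_add_atTop 1 0 N one_ne_zero).comp
      tendsto_natCast_atTop_atTop
  apply squeeze_zero' (g := fun n : ℕ => (Real.log n) ^ N / (1 * (n:ℝ) + 0))
  · filter_upwards [eventually_ge_atTop 1] with n hn
    have : (0:ℝ) < n := by exact_mod_cast hn
    positivity
  · filter_upwards [eventually_ge_atTop 3] with n hn
    have hn3 : (3:ℝ) ≤ n := by exact_mod_cast hn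
    have hnpos : (0:ℝ) < n := by linarith
    have hlog : 1 ≤ Real.log n := by
      rw [Real.le_log_iff_exp_le hnpos]
      calc Real.exp 1 ≤ 2.7182818286 := Real.exp_one_lt_d9.le
        _ ≤ n := by linarith
    have h1 : (Real.log n) ^ β ≤ (Real.log n) ^ (N:ℝ) :=
      Real.rpow_le_rpow_of_exponent_le hlog hN
    have h2 : (Real.log n) ^ (N:ℝ) = (Real.log n) ^ N := Real.rpow_natCast _ N
    rw [one_mul, add_zero]
    have h3 : Real.log n ^ β ≤ Real.log n ^ N := h1.trans_eq h2
    gcongr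
  · exact hg

lemma swos_algebra {N L C μ α : ℝ} (hN : 0 < N) (hL : 0 < L) (hμ : 0 < μ)
    (hα : α = 2 * (1 + 1/μ)) :
    N ^ (3:ℕ) * ((N^μ / N) * (C * (Real.sqrt (N^μ) * L^(-(5:ℤ)))^(-α)))^2
      = C^2 * (L^(10*α) / N) := by
  have hs : Real.sqrt (N^μ) = N ^ (μ/2) := by
    rw [Real.sqrt_eq_rpow, ← Real.rpow_mul hN.le]
    congr 1
    ring
  have hzl : L^(-(5:ℤ)) = L ^ (-5:ℝ) := by
    rw [show ((-5:ℝ) = ((-5:ℤ):ℝ)) from by norm_num, Real.rpow_intCast]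
  have e1 : (N ^ (μ/2) * L ^ (-5:ℝ))^(-α) = N^(-(μ+1)) * L^(5*α) := by
    rw [Real.mul_rpow (Real.rpow_nonneg hN.le _) (Real.rpow_nonneg hL.le _),
      ← Real.rpow_mul hN.le, ← Real.rpow_mul hL.le]
    congr 1
    · congr 1
      field_simp [hα]
      linear_combination (-μ) * hα + (-2) * (mul_one_div_cancel hμ.ne')
    · congr 1
      ring
  have e4 : N^μ / N = N^(μ-1) := by rw [Real.rpow_sub hN, Real.rpow_one]
  rw [hs, hzl, e1, e4, show N ^ (3:ℕ) = N^(3:ℝ) from (Real.rpow_natCast N 3).symm]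
  have key : N^(3:ℝ) * (N^(μ-1) * (C * (N^(-(μ+1)) * L^(5*α))))^2
      = C^2 * ((N^(3:ℝ) * N^(μ-1) * N^(μ-1) * N^(-(μ+1)) * N^(-(μ+1))) * (L^(5*α) * L^(5*α))) := by
    ring
  rw [key, ← Real.rpow_add hN, ← Real.rpow_add hN, ← Real.rpow_add hN, ← Real.rpow_add hN,
    ← Real.rpow_add hL,
    show (3:ℝ) + (μ - 1) + (μ - 1) + -(μ + 1) + -(μ + 1) = -1 from by ring,
    show 5*α + 5*α = 10*α from by ring, Real.rpow_neg_one]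
  ring

/-- **Lemma 2.1 (2): off-diagonal elements.** The probability that some row of Ξₙ contains two distinct entries exceeding (log n)⁻⁵ in absolute value tends to 0. -/
theorem sparse_wigner_offdiagonal_small
    {Ω : Type*} [MeasurableSpace Ω] (P : Measure Ω) [IsProbabilityMeasure P]
    (μ c : ℝ) (hμ0 : 0 < μ) (hμ1 : μ ≤ 1) (hc : 0 < c)
    (p : ℕ → ℝ) (hp : ∀ n : ℕ, p n = (n : ℝ) ^ μ)
    -- the random variables a_{ij} and the Bernoulli variables b_{ij}
    (a b : (n : ℕ) → Fin n → Fin n → Ω → ℝ)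
    (ha_meas : ∀ n (i j : Fin n), Measurable (a n i j))
    (hb_meas : ∀ n (i j : Fin n), Measurable (b n i j))
    (ha_symm : ∀ n (i j : Fin n), a n i j = a n j i)
    (hb_symm : ∀ n (i j : Fin n), b n i j = b n j i)
    -- the a_{ij}, i ≤ j, are identically distributed with common law ν
    (ν : Measure ℝ) [IsProbabilityMeasure ν]
    (ha_law : ∀ n (i j : Fin n), i ≤ j → Measure.map (a n i j) P = ν)
    -- the law ν is symmetric, centered, with unit variance and tail index 2(1+1/μ)
    (hν_symm : Measure.map (fun x : ℝ => -x) ν = ν)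
    (hν_mean : ∫ x, x ∂ν = 0)
    (hν_var : ∫ x, x ^ 2 ∂ν = 1)
    (hν_tail : Tendsto (fun x : ℝ => x ^ (2 * (1 + 1 / μ)) * (ν {y : ℝ | x < |y|}).toReal)
      atTop (nhds c))
    -- the b_{ij}, i ≤ j, are Bernoulli(pₙ/n)
    (hb_val : ∀ n (i j : Fin n) (ω : Ω), b n i j ω = 0 ∨ b n i j ω = 1)
    (hb_law : ∀ (n : ℕ) (i j : Fin n), i ≤ j →
      (P {ω | b n i j ω = 1}).toReal = p n / n)
    -- joint independence of the (upper-triangular) a-entries and b-entries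
    (hindep : ∀ n : ℕ, iIndepFun
      (Sum.elim (fun (q : {q : Fin n × Fin n // q.1 ≤ q.2}) => a n q.1.1 q.1.2)
                (fun (q : {q : Fin n × Fin n // q.1 ≤ q.2}) => b n q.1.1 q.1.2)) P)
    -- the matrix Ξₙ
    (Xi : (n : ℕ) → Ω → Matrix (Fin n) (Fin n) ℝ)
    (hXi : ∀ n (ω : Ω) (i j : Fin n), Xi n ω i j = b n i j ω * a n i j ω / Real.sqrt (p n))
    :
    Tendsto (fun n : ℕ =>
      (P {ω | ∃ i j k : Fin n, j ≠ k ∧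
        (Real.log n) ^ (-(5:ℤ)) < |Xi n ω i j| ∧
        (Real.log n) ^ (-(5:ℤ)) < |Xi n ω i k|}).toReal)
      atTop (nhds 0) := by
  classical
  set α := 2 * (1 + 1 / μ) with hα_def
  have hα : 0 < α := by
    have h1 : 0 < 1 / μ := by positivity
    rw [hα_def]; linarith
  obtain ⟨C, hC, htail⟩ := swos_tail_bound ν hα hc hν_tail
  -- eventual comparison of log powers with n^(μ/2)
  have hlo : (fun x : ℝ => Real.log x ^ (5:ℕ)) =o[atTop] fun x => ((x : ℝ) ^ (μ/10)) ^ (5:ℕ) :=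
    (isLittleO_log_rpow_atTop (by positivity : (0:ℝ) < μ/10)).pow (by norm_num)
  have hloev : ∀ᶠ x : ℝ in atTop,
      ‖Real.log x ^ (5:ℕ)‖ ≤ 1 * ‖((x : ℝ) ^ (μ/10)) ^ (5:ℕ)‖ := hlo.def one_pos
  apply squeeze_zero' (g := fun n : ℕ => C^2 * ((Real.log n)^(10*α) / n))
  · exact Eventually.of_forall (fun n => ENNReal.toReal_nonneg)
  · filter_upwards [eventually_ge_atTop 3, tendsto_natCast_atTop_atTop.eventually hloev]
      with n hn3 hbnd
    have hn3R : (3:ℝ) ≤ (n:ℝ) := by exact_mod_cast hn3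
    have hnpos : (0:ℝ) < (n:ℝ) := by linarith
    set L := Real.log n with hL_def
    have hL1 : (1:ℝ) ≤ L := by
      rw [hL_def, Real.le_log_iff_exp_le hnpos]
      calc Real.exp 1 ≤ 2.7182818286 := Real.exp_one_lt_d9.le
        _ ≤ (n:ℝ) := by linarith
    have hL0 : (0:ℝ) < L := lt_of_lt_of_le one_pos hL1
    have hlogpow : L ^ (5:ℕ) ≤ (n:ℝ) ^ (μ/2) := by
      have h5 : (((n:ℝ)) ^ (μ/10)) ^ (5:ℕ) = (n:ℝ) ^ (μ/2) := by
        rw [← Real.rpow_natCast ((n:ℝ) ^ (μ/10)) 5, ← Real.rpow_mul hnpos.le]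
        congr 1
        push_cast
        ring
      have h6 : ‖L ^ (5:ℕ)‖ = L ^ (5:ℕ) := by
        rw [Real.norm_eq_abs, abs_of_nonneg (by positivity)]
      have h7 : ‖(((n:ℝ)) ^ (μ/10)) ^ (5:ℕ)‖ = (((n:ℝ)) ^ (μ/10)) ^ (5:ℕ) := by
        rw [Real.norm_eq_abs, abs_of_nonneg (by positivity)]
      have := hbnd
      rw [h6, h7, one_mul] at this
      rw [← h5]
      exact this
    set t : ℝ := L ^ (-(5:ℤ)) with ht_def
    have ht0 : (0:ℝ) < t := zpow_pos hL0 _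
    have hpn : 0 < p n := by rw [hp]; positivity
    set s := Real.sqrt (p n) with hs_def
    have hs0 : (0:ℝ) < s := Real.sqrt_pos.2 hpn
    have hsval : s = (n:ℝ) ^ (μ/2) := by
      rw [hs_def, hp, Real.sqrt_eq_rpow, ← Real.rpow_mul hnpos.le]
      congr 1
      ring
    set x := s * t with hx_def
    have hx0 : (0:ℝ) < x := mul_pos hs0 ht0
    have hx1 : (1:ℝ) ≤ x := by
      have h5 : L ^ (5:ℕ) ≤ s := by rw [hsval]; exact hlogpow
      rw [hx_def, ht_def, zpow_neg, ← div_eq_mul_inv, le_div_iff₀ (by positivity), one_mul,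
        show ((5:ℤ) = ((5:ℕ):ℤ)) from rfl, zpow_natCast]
      exact h5
    set S : Set ℝ := {y : ℝ | x < |y|} with hS_def
    have hSm : MeasurableSet S := measurableSet_lt measurable_const measurable_abs
    -- the critical-value implication
    have hcrit : ∀ (i j : Fin n) (ω : Ω), t < |Xi n ω i j| →
        a n i j ω ∈ S ∧ b n i j ω = 1 := by
      intro i j ω hlt
      rcases hb_val n i j ω with h0 | h1
      · exfalso
        rw [hXi n ω i j, h0] at hlt
        simp at hlt
        linarith
      · refine ⟨?_, h1⟩
        rw [hXi n ω i j, h1, one_mul, abs_div, abs_of_pos hs0] at hlt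
        have := (lt_div_iff₀ hs0).mp hlt
        simp only [hS_def, Set.mem_setOf_eq, hx_def]
        nlinarith
    set A : Fin n → Fin n → Set Ω :=
      fun i j => a n i j ⁻¹' S ∩ b n i j ⁻¹' ({1} : Set ℝ) with hA_def
    set D : Fin n → Fin n → Fin n → Set Ω :=
      fun i j k => (A i j ∩ A i k) ∩ {_ω : Ω | j ≠ k} with hD_def
    have hsub : {ω | ∃ i j k : Fin n, j ≠ k ∧ t < |Xi n ω i j| ∧ t < |Xi n ω i k|}
        ⊆ ⋃ i, ⋃ j, ⋃ k, D i j k := by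
      rintro ω ⟨i, j, k, hjk, h1, h2⟩
      have c1 := hcrit i j ω h1
      have c2 := hcrit i k ω h2
      refine Set.mem_iUnion.2 ⟨i, Set.mem_iUnion.2 ⟨j, Set.mem_iUnion.2 ⟨k, ?_⟩⟩⟩
      exact ⟨⟨⟨c1.1, c1.2⟩, ⟨c2.1, c2.2⟩⟩, hjk⟩
    -- pairs in normalized (upper-triangular) form
    have hpair : ∀ i j : Fin n, ∃ q : {q : Fin n × Fin n // q.1 ≤ q.2},
        a n i j = a n q.1.1 q.1.2 ∧ b n i j = b n q.1.1 q.1.2 ∧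
        ((q.1.1 = i ∧ q.1.2 = j) ∨ (q.1.1 = j ∧ q.1.2 = i)) := by
      intro i j
      rcases le_total i j with h | h
      · exact ⟨⟨(i, j), h⟩, rfl, rfl, Or.inl ⟨rfl, rfl⟩⟩
      · exact ⟨⟨(j, i), h⟩, ha_symm n i j, hb_symm n i j, Or.inr ⟨rfl, rfl⟩⟩
    set Mb : ℝ≥0∞ := ENNReal.ofReal (p n / n) with hMb_def
    set Ma : ℝ≥0∞ := ENNReal.ofReal (C * x ^ (-α)) with hMa_def
    set M : ℝ≥0∞ := (Mb * Ma) ^ 2 with hM_def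
    have hνS : ν S ≤ Ma := by
      have h1 := htail x hx1
      calc ν S = ENNReal.ofReal ((ν S).toReal) :=
            (ENNReal.ofReal_toReal (measure_ne_top ν _)).symm
        _ ≤ Ma := ENNReal.ofReal_le_ofReal h1
    have hterm : ∀ i j k : Fin n, j ≠ k → P (A i j ∩ A i k) ≤ M := by
      intro i j k hjk
      obtain ⟨q1, ea1, eb1, loc1⟩ := hpair i j
      obtain ⟨q2, ea2, eb2, loc2⟩ := hpair i k
      have hq12 : q1 ≠ q2 := by
        intro h
        apply hjk
        have h1 : q1.1.1 = q2.1.1 := by rw [h]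
        have h2 : q1.1.2 = q2.1.2 := by rw [h]
        rcases loc1 with ⟨u1, u2⟩ | ⟨u1, u2⟩ <;> rcases loc2 with ⟨v1, v2⟩ | ⟨v1, v2⟩
        · rw [← u2, h2, v2]
        · rw [← u2, h2, v2, ← v1, ← h1, u1]
        · rw [← u1, h1, v1, ← v2, ← h2, u2]
        · rw [← u1, h1, v1]
      have hmeas : ∀ idx ∈ ({Sum.inl q1, Sum.inl q2, Sum.inr q1, Sum.inr q2} :
          Finset ({q : Fin n × Fin n // q.1 ≤ q.2} ⊕ {q : Fin n × Fin n // q.1 ≤ q.2})),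
          MeasurableSet (Sum.elim (fun _ => S) (fun _ => ({1} : Set ℝ)) idx) := by
        rintro (q | q) _
        · exact hSm
        · exact measurableSet_singleton 1
      have hint := (hindep n).measure_inter_preimage_eq_mul
        (sets := Sum.elim (fun _ => S) (fun _ => ({1} : Set ℝ)))
        ({Sum.inl q1, Sum.inl q2, Sum.inr q1, Sum.inr q2} : Finset _) hmeas
      rw [Finset.prod_insert (by simp [hq12]), Finset.prod_insert (by simp),
        Finset.prod_insert (by simp [hq12]), Finset.prod_singleton] at hint
      simp only [Finset.set_biInter_insert, Finset.set_biInter_singleton,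
        Sum.elim_inl, Sum.elim_inr] at hint
      have hset : A i j ∩ A i k = (a n q1.1.1 q1.1.2 ⁻¹' S) ∩ ((a n q2.1.1 q2.1.2 ⁻¹' S) ∩
          ((b n q1.1.1 q1.1.2 ⁻¹' {1}) ∩ (b n q2.1.1 q2.1.2 ⁻¹' {1}))) := by
        simp only [hA_def]
        rw [ea1, eb1, ea2, eb2]
        ext ω
        simp only [Set.mem_inter_iff, Set.mem_preimage]
        tauto
      have hPa1 : P (a n q1.1.1 q1.1.2 ⁻¹' S) = ν S := by
        rw [← ha_law n q1.1.1 q1.1.2 q1.2, Measure.map_apply (ha_meas n _ _) hSm]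
      have hPa2 : P (a n q2.1.1 q2.1.2 ⁻¹' S) = ν S := by
        rw [← ha_law n q2.1.1 q2.1.2 q2.2, Measure.map_apply (ha_meas n _ _) hSm]
      have hPb1 : P (b n q1.1.1 q1.1.2 ⁻¹' {1}) = Mb := by
        have h' : (b n q1.1.1 q1.1.2 ⁻¹' {1} : Set Ω) = {ω | b n q1.1.1 q1.1.2 ω = 1} := rfl
        rw [h', hMb_def, ← hb_law n q1.1.1 q1.1.2 q1.2,
          ENNReal.ofReal_toReal (measure_ne_top P _)]
      have hPb2 : P (b n q2.1.1 q2.1.2 ⁻¹' {1}) = Mb := by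
        have h' : (b n q2.1.1 q2.1.2 ⁻¹' {1} : Set Ω) = {ω | b n q2.1.1 q2.1.2 ω = 1} := rfl
        rw [h', hMb_def, ← hb_law n q2.1.1 q2.1.2 q2.2,
          ENNReal.ofReal_toReal (measure_ne_top P _)]
      calc P (A i j ∩ A i k)
          = ν S * (ν S * (Mb * Mb)) := by rw [hset, hint, hPa1, hPa2, hPb1, hPb2]
        _ ≤ Ma * (Ma * (Mb * Mb)) := by gcongr
        _ = M := by rw [hM_def]; ring
    have hDle : ∀ i j k : Fin n, P (D i j k) ≤ M := by
      intro i j k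
      by_cases hjk : j = k
      · have hempty : D i j k = ∅ := by
          simp only [hD_def]
          simp [hjk]
        simp [hempty]
      · calc P (D i j k) ≤ P (A i j ∩ A i k) :=
            measure_mono Set.inter_subset_left
          _ ≤ M := hterm i j k hjk
    have hk : ∀ i j : Fin n, P (⋃ k, D i j k) ≤ (n : ℝ≥0∞) * M := by
      intro i j
      calc P (⋃ k, D i j k) ≤ ∑' k : Fin n, P (D i j k) := measure_iUnion_le _
        _ ≤ ∑' _k : Fin n, M := ENNReal.tsum_le_tsum (fun k => hDle i j k)
        _ = (n : ℝ≥0∞) * M := by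
            rw [tsum_fintype]
            simp [Finset.sum_const, Finset.card_univ, nsmul_eq_mul]
    have hj : ∀ i : Fin n, P (⋃ j, ⋃ k, D i j k) ≤ (n : ℝ≥0∞) * ((n : ℝ≥0∞) * M) := by
      intro i
      calc P (⋃ j, ⋃ k, D i j k) ≤ ∑' j : Fin n, P (⋃ k, D i j k) := measure_iUnion_le _
        _ ≤ ∑' _j : Fin n, (n : ℝ≥0∞) * M := ENNReal.tsum_le_tsum (fun j => hk i j)
        _ = (n : ℝ≥0∞) * ((n : ℝ≥0∞) * M) := by
            rw [tsum_fintype]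
            simp [Finset.sum_const, Finset.card_univ, nsmul_eq_mul]
    have hsum : P {ω | ∃ i j k : Fin n, j ≠ k ∧ t < |Xi n ω i j| ∧ t < |Xi n ω i k|}
        ≤ (n : ℝ≥0∞) * ((n : ℝ≥0∞) * ((n : ℝ≥0∞) * M)) := by
      calc P {ω | ∃ i j k : Fin n, j ≠ k ∧ t < |Xi n ω i j| ∧ t < |Xi n ω i k|}
          ≤ P (⋃ i, ⋃ j, ⋃ k, D i j k) := measure_mono hsub
        _ ≤ ∑' i : Fin n, P (⋃ j, ⋃ k, D i j k) := measure_iUnion_le _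
        _ ≤ ∑' _i : Fin n, (n : ℝ≥0∞) * ((n : ℝ≥0∞) * M) := ENNReal.tsum_le_tsum (fun i => hj i)
        _ = (n : ℝ≥0∞) * ((n : ℝ≥0∞) * ((n : ℝ≥0∞) * M)) := by
            rw [tsum_fintype]
            simp [Finset.sum_const, Finset.card_univ, nsmul_eq_mul]
    have hfin : ((n : ℝ≥0∞) * ((n : ℝ≥0∞) * ((n : ℝ≥0∞) * M))) ≠ ⊤ := by
      rw [hM_def]
      exact ENNReal.mul_ne_top (ENNReal.natCast_ne_top n)
        (ENNReal.mul_ne_top (ENNReal.natCast_ne_top n)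
          (ENNReal.mul_ne_top (ENNReal.natCast_ne_top n)
            (ENNReal.pow_ne_top (ENNReal.mul_ne_top ENNReal.ofReal_ne_top ENNReal.ofReal_ne_top))))
    have hto := ENNReal.toReal_mono hfin hsum
    have hmnonneg1 : (0:ℝ) ≤ p n / n := div_nonneg hpn.le (Nat.cast_nonneg n)
    have hmnonneg2 : (0:ℝ) ≤ C * x ^ (-α) := by positivity
    have hMto : M.toReal = ((p n / n) * (C * x ^ (-α))) ^ 2 := by
      rw [hM_def, ENNReal.toReal_pow, ENNReal.toReal_mul, hMb_def, hMa_def,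
        ENNReal.toReal_ofReal hmnonneg1, ENNReal.toReal_ofReal hmnonneg2]
    have hRHSto : ((n : ℝ≥0∞) * ((n : ℝ≥0∞) * ((n : ℝ≥0∞) * M))).toReal
        = (n:ℝ) * ((n:ℝ) * ((n:ℝ) * M.toReal)) := by
      simp [ENNReal.toReal_mul]
    calc (P {ω | ∃ i j k : Fin n, j ≠ k ∧ t < |Xi n ω i j| ∧ t < |Xi n ω i k|}).toReal
        ≤ (n:ℝ) * ((n:ℝ) * ((n:ℝ) * M.toReal)) := by rw [← hRHSto]; exact hto
      _ = (n:ℝ) ^ (3:ℕ) * (((n:ℝ)^μ / n) * (C * (Real.sqrt ((n:ℝ)^μ) * L^(-(5:ℤ)))^(-α)))^2 := by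
          rw [hMto, hx_def, hs_def, ht_def, hp]
          ring
      _ = C^2 * (L^(10*α) / n) := swos_algebra hnpos hL0 hμ0 hα_def
  · have h := (swos_log_div (10*α)).const_mul (C^2)
    simpa using h
end

section
/- For every x > 0, the probability P( max_{1 ≤ i ≤ j ≤ n} |(Ξₙ)_{ij}| ≤ x ) converges as n → ∞ to exp( −(c/2) x^{−2(1 + 1/μ)} ). -/
open MeasureTheory ProbabilityTheory Filter

lemma meas_iInter_pair {Ω ι : Type*} [Fintype ι] [MeasurableSpace Ω] (P : Measure Ω)
    [IsProbabilityMeasure P] (f g : ι → Ω → ℝ)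
    (hf : ∀ i, Measurable (f i)) (hg : ∀ i, Measurable (g i))
    (hindep : iIndepFun (Sum.elim f g) P)
    (C : ι → Set (ℝ × ℝ)) (hC : ∀ i, MeasurableSet (C i)) :
    P (⋂ i, {ω | (f i ω, g i ω) ∈ C i}) = ∏ i, P {ω | (f i ω, g i ω) ∈ C i} := by
  classical
  have hmeas : ∀ j : ι ⊕ ι, Measurable (Sum.elim f g j) := by
    rintro (j | j); exacts [hf j, hg j]
  have key : ∀ s : Finset ι,
      P (⋂ i ∈ s, {ω | (f i ω, g i ω) ∈ C i}) = ∏ i ∈ s, P {ω | (f i ω, g i ω) ∈ C i} := by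
    intro s
    induction s using Finset.induction_on with
    | empty => simp
    | insert i t hi ih =>
      have hST : Disjoint ({Sum.inl i, Sum.inr i} : Finset (ι ⊕ ι))
          (t.image Sum.inl ∪ t.image Sum.inr) := by
        simp only [Finset.disjoint_left, Finset.mem_insert, Finset.mem_singleton,
          Finset.mem_union, Finset.mem_image]
        rintro x (rfl | rfl) h <;> aesop
      set S : Finset (ι ⊕ ι) := {Sum.inl i, Sum.inr i} with hS
      set T : Finset (ι ⊕ ι) := t.image Sum.inl ∪ t.image Sum.inr with hT
      have hIF : IndepFun (fun ω (j : S) => Sum.elim f g j ω)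
          (fun ω (j : T) => Sum.elim f g j ω) P :=
        hindep.indepFun_finset S T hST hmeas
      have hmemS1 : Sum.inl i ∈ S := by simp [hS]
      have hmemS2 : Sum.inr i ∈ S := by simp [hS]
      let φ : (S → ℝ) → ℝ × ℝ := fun v => (v ⟨Sum.inl i, hmemS1⟩, v ⟨Sum.inr i, hmemS2⟩)
      have hφ : Measurable φ := (measurable_pi_apply _).prodMk (measurable_pi_apply _)
      have hmemT1 : ∀ j ∈ t, Sum.inl j ∈ T := fun j hj =>
        Finset.mem_union_left _ (Finset.mem_image_of_mem _ hj)
      have hmemT2 : ∀ j ∈ t, Sum.inr j ∈ T := fun j hj =>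
        Finset.mem_union_right _ (Finset.mem_image_of_mem _ hj)
      let M : Set (T → ℝ) := ⋂ j, ⋂ (hj : j ∈ t),
        (fun v : T → ℝ => (v ⟨Sum.inl j, hmemT1 j hj⟩, v ⟨Sum.inr j, hmemT2 j hj⟩)) ⁻¹' C j
      have hM : MeasurableSet M :=
        MeasurableSet.iInter fun j => MeasurableSet.iInter fun hj =>
          (((measurable_pi_apply _).prodMk (measurable_pi_apply _))) (hC j)
      have hpre : (fun ω (j : T) => Sum.elim f g j ω) ⁻¹' M
          = ⋂ j ∈ t, {ω | (f j ω, g j ω) ∈ C j} := by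
        ext ω
        simp only [M, Set.mem_preimage, Set.mem_iInter, Set.mem_setOf_eq]
        rfl
      have hInd2 : IndepFun (fun ω => (f i ω, g i ω))
          (fun ω (j : T) => Sum.elim f g j ω) P := by
        have := hIF.comp hφ measurable_id
        exact this
      have := hInd2.measure_inter_preimage_eq_mul _ _ (hC i) hM
      rw [Finset.set_biInter_insert, ← hpre]
      have hfirst : {ω | (f i ω, g i ω) ∈ C i} = (fun ω => (f i ω, g i ω)) ⁻¹' C i := rfl
      rw [hfirst, this, Finset.prod_insert hi, hpre, ih]; rfl
  have := key Finset.univ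
  simpa using this

lemma tendsto_one_sub_pow_exp {t : ℕ → ℝ} {N : ℕ → ℕ} {L : ℝ}
    (ht : Tendsto t atTop (nhds 0))
    (hNt : Tendsto (fun n => (N n : ℝ) * t n) atTop (nhds L)) :
    Tendsto (fun n => (1 - t n) ^ N n) atTop (nhds (Real.exp (-L))) := by
  have hev : ∀ᶠ n in atTop, t n < 1/2 := ht.eventually_lt_const (by norm_num)
  have hlog : Tendsto (fun n => (N n : ℝ) * Real.log (1 - t n)) atTop (nhds (-L)) := by
    have hlow : Tendsto (fun n => -((N n : ℝ) * t n) / (1 - t n)) atTop (nhds (-L)) := by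
      have h1 : Tendsto (fun n => (1 : ℝ) - t n) atTop (nhds 1) := by
        simpa using (tendsto_const_nhds (x := (1:ℝ))).sub ht
      have h := hNt.neg.div h1 (by norm_num)
      rw [div_one] at h
      exact h
    have hup : Tendsto (fun n => -((N n : ℝ) * t n)) atTop (nhds (-L)) := hNt.neg
    refine tendsto_of_tendsto_of_tendsto_of_le_of_le' hlow hup ?_ ?_
    · filter_upwards [hev] with n hn
      have hpos : 0 < 1 - t n := by linarith
      have h2 : 1 - (1 - t n)⁻¹ ≤ Real.log (1 - t n) := Real.one_sub_inv_le_log_of_pos hpos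
      have h3 : -(t n) / (1 - t n) ≤ Real.log (1 - t n) := by
        have heq : 1 - (1 - t n)⁻¹ = -(t n) / (1 - t n) := by field_simp; ring
        linarith [heq ▸ h2]
      calc -((N n : ℝ) * t n) / (1 - t n) = (N n : ℝ) * (-(t n) / (1 - t n)) := by ring
        _ ≤ (N n : ℝ) * Real.log (1 - t n) :=
          mul_le_mul_of_nonneg_left h3 (Nat.cast_nonneg _)
    · filter_upwards [hev] with n hn
      have hpos : 0 < 1 - t n := by linarith
      have h2 : Real.log (1 - t n) ≤ -(t n) := by
        have := Real.log_le_sub_one_of_pos hpos; linarith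
      calc (N n : ℝ) * Real.log (1 - t n) ≤ (N n : ℝ) * (-(t n)) :=
            mul_le_mul_of_nonneg_left h2 (Nat.cast_nonneg _)
        _ = -((N n : ℝ) * t n) := by ring
  have := (Real.continuous_exp.tendsto _).comp hlog
  refine this.congr' ?_
  filter_upwards [hev] with n hn
  have hpos : 0 < 1 - t n := by linarith
  simp only [Function.comp]
  rw [Real.exp_nat_mul, Real.exp_log hpos]

lemma card_le_pairs (n : ℕ) :
    (Fintype.card {q : Fin n × Fin n // q.1 ≤ q.2} : ℝ) = (n : ℝ) * ((n : ℝ) + 1) / 2 := by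
  have h : Fintype.card {q : Fin n × Fin n // q.1 ≤ q.2} = Fintype.card (Sym2 (Fin n)) :=
    (Fintype.card_congr Sym2.sortEquiv).symm
  rw [h, Sym2.card, Fintype.card_fin, Nat.cast_choose_two]
  push_cast; ring

/-- **Lemma 2.2: the largest entry.** For every x > 0, P(max_{i≤j} |(Ξₙ)_{ij}| ≤ x) → exp(−(c/2)·x^{−2(1+1/μ)}). -/
theorem sparse_wigner_max_entry_frechet
    {Ω : Type*} [MeasurableSpace Ω] (P : Measure Ω) [IsProbabilityMeasure P]
    (μ c : ℝ) (hμ0 : 0 < μ) (hμ1 : μ ≤ 1) (hc : 0 < c)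
    (p : ℕ → ℝ) (hp : ∀ n : ℕ, p n = (n : ℝ) ^ μ)
    -- the random variables a_{ij} and the Bernoulli variables b_{ij}
    (a b : (n : ℕ) → Fin n → Fin n → Ω → ℝ)
    (ha_meas : ∀ n (i j : Fin n), Measurable (a n i j))
    (hb_meas : ∀ n (i j : Fin n), Measurable (b n i j))
    (ha_symm : ∀ n (i j : Fin n), a n i j = a n j i)
    (hb_symm : ∀ n (i j : Fin n), b n i j = b n j i)
    -- the a_{ij}, i ≤ j, are identically distributed with common law ν
    (ν : Measure ℝ) [IsProbabilityMeasure ν]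
    (ha_law : ∀ n (i j : Fin n), i ≤ j → Measure.map (a n i j) P = ν)
    -- the law ν is symmetric, centered, with unit variance and tail index 2(1+1/μ)
    (hν_symm : Measure.map (fun x : ℝ => -x) ν = ν)
    (hν_mean : ∫ x, x ∂ν = 0)
    (hν_var : ∫ x, x ^ 2 ∂ν = 1)
    (hν_tail : Tendsto (fun x : ℝ => x ^ (2 * (1 + 1 / μ)) * (ν {y : ℝ | x < |y|}).toReal)
      atTop (nhds c))
    -- the b_{ij}, i ≤ j, are Bernoulli(pₙ/n)
    (hb_val : ∀ n (i j : Fin n) (ω : Ω), b n i j ω = 0 ∨ b n i j ω = 1)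
    (hb_law : ∀ (n : ℕ) (i j : Fin n), i ≤ j →
      (P {ω | b n i j ω = 1}).toReal = p n / n)
    -- joint independence of the (upper-triangular) a-entries and b-entries
    (hindep : ∀ n : ℕ, iIndepFun
      (Sum.elim (fun (q : {q : Fin n × Fin n // q.1 ≤ q.2}) => a n q.1.1 q.1.2)
                (fun (q : {q : Fin n × Fin n // q.1 ≤ q.2}) => b n q.1.1 q.1.2)) P)
    -- the matrix Ξₙ
    (Xi : (n : ℕ) → Ω → Matrix (Fin n) (Fin n) ℝ)
    (hXi : ∀ n (ω : Ω) (i j : Fin n), Xi n ω i j = b n i j ω * a n i j ω / Real.sqrt (p n))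
    :
    ∀ x : ℝ, 0 < x →
      Tendsto (fun n : ℕ =>
        (P {ω | ∀ i j : Fin n, i ≤ j → |Xi n ω i j| ≤ x}).toReal)
        atTop (nhds (Real.exp (-(c / 2) * x ^ (-(2 * (1 + 1 / μ)))))) := by
  intro x hx
  classical
  set α : ℝ := 2 * (1 + 1 / μ) with hα
  have hμne : μ ≠ 0 := ne_of_gt hμ0
  have hα_pos : 0 < α := by
    have h1 : 0 < 1 / μ := by positivity
    rw [hα]; linarith
  have hxα : 0 < x ^ α := Real.rpow_pos_of_pos hx α
  set T : ℕ → ℝ := fun n => (ν {y : ℝ | x * Real.sqrt (p n) < |y|}).toReal with hTdef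
  set t : ℕ → ℝ := fun n => (p n / n) * T n with htdef
  set N : ℕ → ℕ := fun n => Fintype.card {q : Fin n × Fin n // q.1 ≤ q.2} with hNdef
  -- Step 1: exact product formula for n ≥ 1
  have key : ∀ n : ℕ, 1 ≤ n →
      (P {ω | ∀ i j : Fin n, i ≤ j → |Xi n ω i j| ≤ x}).toReal = (1 - t n) ^ N n := by
    intro n hn
    have hnR : (0 : ℝ) < n := by exact_mod_cast hn
    have hpn_pos : 0 < p n := by rw [hp]; exact Real.rpow_pos_of_pos hnR μ
    have hsq : 0 < Real.sqrt (p n) := Real.sqrt_pos.2 hpn_pos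
    set ι := {q : Fin n × Fin n // q.1 ≤ q.2}
    set fa : ι → Ω → ℝ := fun q => a n q.1.1 q.1.2 with hfa
    set fb : ι → Ω → ℝ := fun q => b n q.1.1 q.1.2 with hfb
    set C : Set (ℝ × ℝ) := {uv | |uv.2 * uv.1 / Real.sqrt (p n)| ≤ x} with hCdef
    have hC : MeasurableSet C := by
      have : C = (fun uv : ℝ × ℝ => |uv.2 * uv.1 / Real.sqrt (p n)|) ⁻¹' Set.Iic x := rfl
      rw [this]
      exact (((measurable_snd.mul measurable_fst).div_const _).abs) measurableSet_Iic
    have hE : {ω | ∀ i j : Fin n, i ≤ j → |Xi n ω i j| ≤ x}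
        = ⋂ q : ι, {ω | (fa q ω, fb q ω) ∈ C} := by
      ext ω
      simp only [Set.mem_setOf_eq, Set.mem_iInter]
      constructor
      · intro h q
        have h2 := h q.1.1 q.1.2 q.2
        rw [hXi] at h2
        exact h2
      · intro h i j hij
        rw [hXi]
        exact h ⟨(i, j), hij⟩
    have hprod := meas_iInter_pair P fa fb (fun q => ha_meas n _ _) (fun q => hb_meas n _ _)
      (hindep n) (fun _ => C) (fun _ => hC)
    have hSset : MeasurableSet {y : ℝ | x * Real.sqrt (p n) < |y|} :=
      measurable_abs measurableSet_Ioi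
    have hq : ∀ q : ι, (P {ω | (fa q ω, fb q ω) ∈ C}).toReal = 1 - t n := by
      intro q
      set A : Set Ω := {ω | (fa q ω, fb q ω) ∈ C} with hA
      have hmeasA : MeasurableSet A :=
        ((ha_meas n _ _).prodMk (hb_meas n _ _)) hC
      have hcompl : Aᶜ = fb q ⁻¹' {1} ∩ fa q ⁻¹' {y | x * Real.sqrt (p n) < |y|} := by
        ext ω
        simp only [hA, Set.mem_compl_iff, Set.mem_setOf_eq, Set.mem_inter_iff,
          Set.mem_preimage, Set.mem_singleton_iff, hCdef, not_le]
        rcases hb_val n q.1.1 q.1.2 ω with h0 | h1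
        · constructor
          · intro habs
            exfalso
            rw [show fb q ω = 0 from h0] at habs
            simp only [zero_mul, zero_div, abs_zero] at habs
            linarith
          · rintro ⟨hb1, -⟩
            rw [show fb q ω = 0 from h0] at hb1
            norm_num at hb1
        · rw [show fb q ω = 1 from h1]
          simp only [one_mul]
          rw [abs_div, abs_of_pos hsq, lt_div_iff₀ hsq]
          constructor
          · intro habs
            exact ⟨by trivial, by linarith [habs]⟩
          · rintro ⟨-, hgt⟩
            linarith [hgt]
      have hindep2 : IndepFun (fb q) (fa q) P :=
        (hindep n).indepFun (show (Sum.inr q : ι ⊕ ι) ≠ Sum.inl q by simp)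
      have hPc : P Aᶜ = P (fb q ⁻¹' {1}) * P (fa q ⁻¹' {y | x * Real.sqrt (p n) < |y|}) := by
        rw [hcompl]
        exact hindep2.measure_inter_preimage_eq_mul _ _ (measurableSet_singleton 1) hSset
      have hb1 : (P (fb q ⁻¹' {1})).toReal = p n / n := by
        have hset : fb q ⁻¹' {1} = {ω | b n q.1.1 q.1.2 ω = 1} := by
          ext ω; simp [hfb]
        rw [hset]
        exact hb_law n _ _ q.2
      have ha1 : P (fa q ⁻¹' {y | x * Real.sqrt (p n) < |y|})
          = ν {y | x * Real.sqrt (p n) < |y|} := by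
        rw [← ha_law n q.1.1 q.1.2 q.2, Measure.map_apply (ha_meas n _ _) hSset]
      have hA_eq : P A = 1 - P Aᶜ := by
        have := prob_compl_eq_one_sub (μ := P) hmeasA.compl
        rwa [compl_compl] at this
      have hle : P Aᶜ ≤ 1 := prob_le_one
      rw [hA_eq, ENNReal.toReal_sub_of_le hle ENNReal.one_ne_top, ENNReal.toReal_one,
        hPc, ENNReal.toReal_mul, hb1, ha1]
    rw [hE, hprod, ENNReal.toReal_prod]
    simp only [hq]
    rw [Finset.prod_const, Finset.card_univ]
  -- Step 2: asymptotics
  have hsq_eq : ∀ n : ℕ, Real.sqrt (p n) = (n : ℝ) ^ (μ / 2) := by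
    intro n
    rw [hp, Real.sqrt_eq_rpow, ← Real.rpow_mul (Nat.cast_nonneg n)]
    congr 1
    ring
  have hs_tend : Tendsto (fun n : ℕ => x * Real.sqrt (p n)) atTop atTop := by
    have h1 : Tendsto (fun n : ℕ => ((n : ℝ) ^ (μ / 2))) atTop atTop :=
      (tendsto_rpow_atTop (by positivity)).comp tendsto_natCast_atTop_atTop
    have h2 := Tendsto.const_mul_atTop hx h1
    refine h2.congr fun n => ?_
    rw [hsq_eq]
  have hcomp : Tendsto (fun n : ℕ => (x * Real.sqrt (p n)) ^ α * T n) atTop (nhds c) :=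
    hν_tail.comp hs_tend
  have hpow : ∀ n : ℕ, 1 ≤ n → (x * Real.sqrt (p n)) ^ α = x ^ α * (n : ℝ) ^ (μ + 1) := by
    intro n hn
    have hnR : (0 : ℝ) < n := by exact_mod_cast hn
    rw [hsq_eq, Real.mul_rpow hx.le (Real.rpow_nonneg (Nat.cast_nonneg n) _),
      ← Real.rpow_mul (Nat.cast_nonneg n)]
    congr 2
    rw [hα]
    field_simp
  have hNcast : ∀ n : ℕ, (N n : ℝ) = (n : ℝ) * ((n : ℝ) + 1) / 2 := fun n => card_le_pairs n
  have hNt : Tendsto (fun n => (N n : ℝ) * t n) atTop (nhds (c / 2 * x ^ (-α))) := by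
    have hcoef : Tendsto (fun n : ℕ => ((n : ℝ) + 1) / (2 * x ^ α * (n : ℝ))) atTop
        (nhds (1 / (2 * x ^ α))) := by
      have h1 : Tendsto (fun n : ℕ => ((n : ℝ) + 1) / (n : ℝ)) atTop (nhds 1) := by
        have h2 : Tendsto (fun n : ℕ => 1 + ((n : ℝ))⁻¹) atTop (nhds 1) := by
          have := tendsto_inv_atTop_nhds_zero_nat (𝕜 := ℝ)
          simpa using (tendsto_const_nhds (x := (1:ℝ))).add this
        refine h2.congr' ?_
        filter_upwards [eventually_ge_atTop 1] with n hn
        have hnR : ((n : ℝ)) ≠ 0 := by positivity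
        field_simp
      have h3 := h1.mul (tendsto_const_nhds (x := 1 / (2 * x ^ α)))
      simp only [one_mul] at h3
      refine h3.congr fun n => ?_
      rw [div_mul_div_comm, mul_one]
      ring_nf
    have hmul := hcoef.mul hcomp
    have hlim_eq : 1 / (2 * x ^ α) * c = c / 2 * x ^ (-α) := by
      rw [Real.rpow_neg hx.le]
      field_simp
    rw [hlim_eq] at hmul
    refine hmul.congr' ?_
    filter_upwards [eventually_ge_atTop 1] with n hn
    have hnR : (0 : ℝ) < n := by exact_mod_cast hn
    simp only [htdef]
    rw [hpow n hn, hNcast n, hp]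
    have hrp : (n : ℝ) ^ (μ + 1) = (n : ℝ) ^ μ * (n : ℝ) := by
      rw [Real.rpow_add hnR, Real.rpow_one]
    rw [hrp]
    field_simp
  have hN_at : Tendsto (fun n => (N n : ℝ)) atTop atTop := by
    refine tendsto_atTop_mono ?_ (tendsto_natCast_atTop_atTop.atTop_div_const two_pos)
    intro n
    rw [hNcast n]
    have : (0:ℝ) ≤ n := Nat.cast_nonneg n
    nlinarith
  have ht_tend : Tendsto t atTop (nhds 0) := by
    have hdiv : Tendsto (fun n => ((N n : ℝ) * t n) / (N n : ℝ)) atTop (nhds 0) :=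
      hNt.div_atTop hN_at
    refine hdiv.congr' ?_
    filter_upwards [eventually_ge_atTop 1] with n hn
    have hnR : (0 : ℝ) < n := by exact_mod_cast hn
    have hNpos : (0:ℝ) < (N n : ℝ) := by rw [hNcast n]; nlinarith
    exact mul_div_cancel_left₀ (t n) (ne_of_gt hNpos)
  have hmain := tendsto_one_sub_pow_exp ht_tend hNt
  have hexp_eq : Real.exp (-(c / 2 * x ^ (-α))) = Real.exp (-(c / 2) * x ^ (-(2 * (1 + 1 / μ)))) := by
    rw [← hα]; ring_nf
  rw [hexp_eq] at hmain
  refine hmain.congr' ?_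
  filter_upwards [eventually_ge_atTop 1] with n hn
  exact (key n hn).symm
end

section
/- For every constant C > 1, the ratio h(C m)/h(m) tends to +∞ as m → ∞. -/
open MeasureTheory ProbabilityTheory Filter Matrix

/-- **A property of the inverse scale function h.**
For every C > 1, h(Cm)/h(m) → ∞ as m → ∞. -/
theorem h_ratio_tendsto_atTop
    -- the sparsity exponent g : a monotone increasing bijection of (0,∞)
    (g : ℝ → ℝ)
    (hg_pos : ∀ x : ℝ, 0 < x → 0 < g x)
    (hg_mono : ∀ x y : ℝ, 0 < x → x < y → g x < g y)
    (hg_surj : ∀ y : ℝ, 0 < y → ∃ x : ℝ, 0 < x ∧ g x = y)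
    (hg1 : Tendsto (fun x : ℝ => g x / Real.log (Real.log x)) atTop atTop)
    (hg2 : Tendsto (fun x : ℝ => g x * Real.log (Real.log x) / Real.log x) atTop (nhds 0))
    (hg3 : ∀ C : ℝ, 0 < C → ∃ X : ℝ, ∀ x y : ℝ, X ≤ x → x < y →
      C * (g y * Real.log (Real.log y) - g x * Real.log (Real.log x))
        < Real.log y - Real.log x)
    -- the constant a > 1 and the function h with h(a·√((log x)^{g(x)})) = x
    (a₀ : ℝ) (ha₀ : 1 < a₀)
    (h : ℝ → ℝ)
    (hh : ∀ x : ℝ, 1 ≤ x → h (a₀ * Real.sqrt ((Real.log x) ^ (g x))) = x)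
    :
    ∀ C : ℝ, 1 < C →
      Tendsto (fun m : ℝ => h (C * m) / h m) atTop atTop := by
  intro C hC
  have ha₀0 : (0:ℝ) < a₀ := lt_trans one_pos ha₀
  set f : ℝ → ℝ := fun x => a₀ * Real.sqrt ((Real.log x) ^ (g x)) with hfdef
  set G : ℝ → ℝ := fun x => g x * Real.log (Real.log x) with hGdef
  -- continuity of g on (0, ∞)
  have hsmg : StrictMonoOn g (Set.Ioi 0) := fun x hx y _ hxy => hg_mono x y hx hxy
  have hg_img : g '' Set.Ioi 0 = Set.Ioi 0 := by
    apply Set.Subset.antisymm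
    · rintro _ ⟨x, hx, rfl⟩; exact hg_pos x hx
    · rintro y hy
      obtain ⟨x, hx, hxy⟩ := hg_surj y hy
      exact ⟨x, hx, hxy⟩
  have hg_cont : ∀ a : ℝ, 0 < a → ContinuousAt g a := by
    intro a ha
    refine hsmg.continuousAt_of_image_mem_nhds (Ioi_mem_nhds ha) ?_
    rw [hg_img]
    exact Ioi_mem_nhds (hg_pos a ha)
  -- basic facts
  have e_lt_3 : Real.exp 1 < 3 := by
    have := Real.exp_one_lt_d9; linarith
  have hlog3 : ∀ x : ℝ, 3 ≤ x → 1 < Real.log x := by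
    intro x hx
    calc (1:ℝ) = Real.log (Real.exp 1) := (Real.log_exp 1).symm
      _ < Real.log x := Real.log_lt_log (Real.exp_pos 1) (lt_of_lt_of_le e_lt_3 hx)
  have hlogpos : ∀ x : ℝ, 3 ≤ x → 0 < Real.log x := fun x hx =>
    lt_trans one_pos (hlog3 x hx)
  have hllpos : ∀ x : ℝ, 3 ≤ x → 0 < Real.log (Real.log x) := fun x hx =>
    Real.log_pos (hlog3 x hx)
  -- exponential formula for f
  have hfx : ∀ x : ℝ, 3 ≤ x → f x = a₀ * Real.exp (G x / 2) := by
    intro x hx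
    have hl : 0 < Real.log x := hlogpos x hx
    have h1 : (Real.log x) ^ (g x) = Real.exp (Real.log (Real.log x) * g x) :=
      Real.rpow_def_of_pos hl _
    have h2 : Real.log (Real.log x) * g x = G x / 2 + G x / 2 := by
      rw [hGdef]; ring
    rw [hfdef]
    simp only [h1, h2, Real.exp_add, Real.sqrt_mul_self (Real.exp_nonneg _)]
  -- strict monotonicity of G on [3, ∞)
  have hGmono : StrictMonoOn G (Set.Ici 3) := by
    intro x hx y hy hxy
    have hx3 : (3:ℝ) ≤ x := hx
    have h1 : 0 < g x := hg_pos x (by linarith)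
    have h2 : g x < g y := hg_mono x y (by linarith) hxy
    have h3 : 0 < Real.log (Real.log x) := hllpos x hx3
    have h4 : Real.log (Real.log x) < Real.log (Real.log y) :=
      Real.log_lt_log (hlogpos x hx3) (Real.log_lt_log (by linarith) hxy)
    have : G x = g x * Real.log (Real.log x) := rfl
    have : G y = g y * Real.log (Real.log y) := rfl
    simp only [hGdef]
    nlinarith
  -- strict monotonicity of f on [3, ∞)
  have hfmono : StrictMonoOn f (Set.Ici 3) := by
    intro x hx y hy hxy
    rw [hfx x hx, hfx y hy]
    have := hGmono hx hy hxy
    have := Real.exp_lt_exp.mpr (by linarith : G x / 2 < G y / 2)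
    nlinarith [Real.exp_pos (G x / 2)]
  -- f tends to infinity
  have hll_top : Tendsto (fun x : ℝ => Real.log (Real.log x)) atTop atTop :=
    Real.tendsto_log_atTop.comp Real.tendsto_log_atTop
  have hG_top : Tendsto G atTop atTop := by
    apply tendsto_atTop_mono' atTop
      (show ∀ᶠ x : ℝ in atTop, Real.log (Real.log x) ≤ G x from ?_) hll_top
    filter_upwards [hll_top.eventually_ge_atTop 1, hg1.eventually_ge_atTop 1] with x h1 h2
    have hgx : 1 ≤ g x := by
      have h0 : 0 < Real.log (Real.log x) := by linarith
      rw [le_div_iff₀ h0] at h2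
      nlinarith
    have : G x = g x * Real.log (Real.log x) := rfl
    nlinarith
  have hf_top : Tendsto f atTop atTop := by
    have h1 : Tendsto (fun x : ℝ => a₀ * Real.exp (G x / 2)) atTop atTop := by
      apply Tendsto.const_mul_atTop ha₀0
      exact Real.tendsto_exp_atTop.comp (hG_top.atTop_div_const two_pos)
    apply h1.congr'
    filter_upwards [eventually_ge_atTop (3:ℝ)] with x hx
    exact (hfx x hx).symm
  -- continuity of f on [3, ∞)
  have hf_cont : ∀ x : ℝ, 3 ≤ x → ContinuousAt f x := by
    intro x hx
    have hx0 : (0:ℝ) < x := by linarith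
    have hlne : Real.log x ≠ 0 := ne_of_gt (hlogpos x hx)
    have hpair : ContinuousAt (fun y : ℝ => (Real.log y, g y)) x :=
      (Real.continuousAt_log (ne_of_gt hx0)).prodMk (hg_cont x hx0)
    have h1 : ContinuousAt (fun y : ℝ => (Real.log y) ^ (g y)) x :=
      (Real.continuousAt_log (ne_of_gt hx0)).rpow (hg_cont x hx0) (Or.inl hlne)
    exact continuousAt_const.mul (Real.continuous_sqrt.continuousAt.comp h1)
  -- surjectivity of f onto [f 3, ∞)
  have hf_surj : ∀ m : ℝ, f 3 ≤ m → ∃ x : ℝ, 3 ≤ x ∧ f x = m := by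
    intro m hm
    obtain ⟨b, hb⟩ := ((hf_top.eventually_ge_atTop m).and (eventually_ge_atTop (3:ℝ))).exists
    have hcont : ContinuousOn f (Set.Icc 3 b) := fun x hx =>
      (hf_cont x hx.1).continuousWithinAt
    have := intermediate_value_Icc hb.2 hcont
    have hmmem : m ∈ Set.Icc (f 3) (f b) := ⟨hm, hb.1⟩
    obtain ⟨x, hx, hfx'⟩ := this hmmem
    exact ⟨x, hx.1, hfx'⟩
  -- main argument
  rw [tendsto_atTop]
  intro K
  have hlogC : 0 < Real.log C := Real.log_pos hC
  set D : ℝ := max K 1 with hDdef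
  have hD1 : 1 ≤ D := le_max_right _ _
  have hKD : K ≤ D := le_max_left _ _
  set C₁ : ℝ := D / (2 * Real.log C) with hC₁def
  have hC₁pos : 0 < C₁ := div_pos (by linarith) (by linarith)
  obtain ⟨X, hX⟩ := hg3 C₁ hC₁pos
  set X' : ℝ := max X 3 with hX'def
  have hX'3 : (3:ℝ) ≤ X' := le_max_right _ _
  have hfX'pos : 0 < f X' := by
    rw [hfx X' hX'3]; positivity
  filter_upwards [eventually_ge_atTop (f X' + 1)] with m hm
  have hmpos : 0 < m := by linarith
  have hmf3 : f 3 ≤ m := by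
    have h1 : f 3 ≤ f X' := hfmono.monotoneOn Set.self_mem_Ici hX'3 hX'3
    linarith
  have hCm3 : f 3 ≤ C * m := by nlinarith
  obtain ⟨x, hx3, hfxm⟩ := hf_surj m hmf3
  obtain ⟨y, hy3, hfym⟩ := hf_surj (C * m) hCm3
  -- x is large
  have hxX' : X' < x := by
    by_contra hle
    push_neg at hle
    have : f x ≤ f X' := hfmono.monotoneOn hx3 hX'3 hle
    rw [hfxm] at this
    linarith
  -- x < y
  have hxy : x < y := by
    by_contra hle
    push_neg at hle
    have : f y ≤ f x := hfmono.monotoneOn hy3 hx3 hle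
    rw [hfxm, hfym] at this
    nlinarith
  -- the key identity G y - G x = 2 log C
  have hkey : G y - G x = 2 * Real.log C := by
    have h1 : a₀ * Real.exp (G y / 2) = C * (a₀ * Real.exp (G x / 2)) := by
      rw [← hfx y hy3, ← hfx x hx3, hfxm, hfym]
    have h2 : Real.exp (G y / 2) = C * Real.exp (G x / 2) := by
      apply mul_left_cancel₀ (ne_of_gt ha₀0)
      rw [h1]; ring
    have h3 : G y / 2 = Real.log C + G x / 2 := by
      have := congrArg Real.log h2
      rwa [Real.log_exp, Real.log_mul (by positivity) (Real.exp_ne_zero _),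
        Real.log_exp] at this
    linarith
  -- apply hg3
  have hbound : C₁ * (G y - G x) < Real.log y - Real.log x :=
    hX x y (le_trans (le_max_left _ _) (le_of_lt hxX')) hxy
  rw [hkey] at hbound
  have hC₁2 : C₁ * (2 * Real.log C) = D := by
    rw [hC₁def]
    field_simp
  rw [hC₁2] at hbound
  -- conclude
  have hxpos : (0:ℝ) < x := by linarith
  have hypos : (0:ℝ) < y := by linarith
  have hhx : h m = x := by rw [← hfxm]; exact hh x (by linarith)
  have hhy : h (C * m) = y := by rw [← hfym]; exact hh y (by linarith)
  rw [hhx, hhy]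
  have hlog_ratio : D < Real.log (y / x) := by
    rwa [Real.log_div (ne_of_gt hypos) (ne_of_gt hxpos)]
  have h1 : Real.exp D ≤ y / x := by
    rw [← Real.exp_log (div_pos hypos hxpos)]
    exact le_of_lt (Real.exp_lt_exp.mpr hlog_ratio)
  have h2 : D < Real.exp D := by
    have := Real.add_one_le_exp D
    linarith
  linarith
end

section
/- The maximum entry T₁ = max_{1 ≤ i ≤ j ≤ n} |(Ξₙ)_{ij}| converges in probability to the constant a as n → ∞; that is, for every x ∈ (0, a), P(T₁ < x) → 0, and for every x > a, P(T₁ < x) → 1. -/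
open MeasureTheory ProbabilityTheory Filter Set

/-- ψ x = g x * log log x tends to infinity. -/
lemma psi_tendsto_atTop (g : ℝ → ℝ)
    (hg_pos : ∀ x : ℝ, 0 < x → 0 < g x)
    (hg1 : Tendsto (fun x : ℝ => g x / Real.log (Real.log x)) atTop atTop) :
    Tendsto (fun x : ℝ => g x * Real.log (Real.log x)) atTop atTop := by
  have hLL : Tendsto (fun x : ℝ => Real.log (Real.log x)) atTop atTop :=
    Real.tendsto_log_atTop.comp Real.tendsto_log_atTop
  rw [tendsto_atTop]
  intro K
  filter_upwards [hg1.eventually_ge_atTop K, hLL.eventually_ge_atTop 1,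
    eventually_gt_atTop (0:ℝ)] with z h1 h2 h0
  have hLLpos : (0:ℝ) < Real.log (Real.log z) := lt_of_lt_of_le one_pos h2
  rcases le_or_gt K 0 with hK | hK
  · have : 0 ≤ g z * Real.log (Real.log z) := le_of_lt (mul_pos (hg_pos z h0) hLLpos)
    linarith
  · have hgz : K * Real.log (Real.log z) ≤ g z := by
      rw [le_div_iff₀ hLLpos] at h1
      exact h1
    calc K = K * 1 := by ring
    _ ≤ K * Real.log (Real.log z) := by nlinarith
    _ ≤ g z := hgz
    _ ≤ g z * Real.log (Real.log z) := by nlinarith [hg_pos z h0]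

lemma g_continuousAt (g : ℝ → ℝ)
    (hg_pos : ∀ x : ℝ, 0 < x → 0 < g x)
    (hg_mono : ∀ x y : ℝ, 0 < x → x < y → g x < g y)
    (hg_surj : ∀ y : ℝ, 0 < y → ∃ x : ℝ, 0 < x ∧ g x = y)
    {z : ℝ} (hz : 0 < z) : ContinuousAt g z := by
  have hmono : MonotoneOn g (Ioi (0:ℝ)) := by
    intro u hu v hv huv
    rcases eq_or_lt_of_le huv with rfl | hlt
    · exact le_rfl
    · exact (hg_mono u v hu hlt).le
  refine continuousAt_of_monotoneOn_of_exists_between hmono (isOpen_Ioi.mem_nhds hz) ?_ ?_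
  · intro bb hbb
    have hgz := hg_pos z hz
    have h1 : max bb 0 < g z := max_lt hbb hgz
    set v := (max bb 0 + g z) / 2 with hv
    have hv0 : 0 < v := by
      have : (0:ℝ) ≤ max bb 0 := le_max_right _ _
      have := hgz; simp only [hv]; linarith
    obtain ⟨cc, hcc0, hgcc⟩ := hg_surj v hv0
    refine ⟨cc, hcc0, ?_⟩
    constructor
    · rw [hgcc]; have : bb ≤ max bb 0 := le_max_left _ _; simp only [hv]; linarith
    · rw [hgcc]; simp only [hv]; linarith
  · intro bb hbb
    have hgz := hg_pos z hz
    set v := (g z + bb) / 2 with hv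
    have hv0 : 0 < v := by simp only [hv]; linarith
    obtain ⟨cc, hcc0, hgcc⟩ := hg_surj v hv0
    exact ⟨cc, hcc0, by rw [hgcc]; constructor <;> (simp only [hv]; linarith)⟩

lemma phi_exp_form (g : ℝ → ℝ) (a₀ : ℝ) {z : ℝ} (hz : 1 < z) :
    a₀ * Real.sqrt ((Real.log z) ^ (g z)) =
      a₀ * Real.exp (g z * Real.log (Real.log z) / 2) := by
  have hlz : 0 < Real.log z := Real.log_pos hz
  rw [Real.rpow_def_of_pos hlz, mul_comm (Real.log (Real.log z)) (g z)] at *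
  rw [← Real.exp_half]

lemma phi_surj (g : ℝ → ℝ)
    (hg_pos : ∀ x : ℝ, 0 < x → 0 < g x)
    (hg_mono : ∀ x y : ℝ, 0 < x → x < y → g x < g y)
    (hg_surj : ∀ y : ℝ, 0 < y → ∃ x : ℝ, 0 < x ∧ g x = y)
    (hg1 : Tendsto (fun x : ℝ => g x / Real.log (Real.log x)) atTop atTop)
    (a₀ : ℝ) (ha₀ : 0 < a₀) (t : ℝ) (ht : 0 ≤ t) :
    ∃ m : ℝ, 1 ≤ m ∧ a₀ * Real.sqrt ((Real.log m) ^ (g m)) = t := by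
  set φ : ℝ → ℝ := fun z => a₀ * Real.sqrt ((Real.log z) ^ (g z)) with hφ
  have hφ1 : φ 1 = 0 := by
    simp only [hφ, Real.log_one]
    rw [Real.zero_rpow (ne_of_gt (hg_pos 1 one_pos))]
    simp
  -- φ tends to infinity
  have hψ := psi_tendsto_atTop g hg_pos hg1
  have hφtop : Tendsto φ atTop atTop := by
    have : ∀ᶠ z in atTop, a₀ * Real.exp (g z * Real.log (Real.log z) / 2) = φ z := by
      filter_upwards [eventually_gt_atTop (1:ℝ)] with z hz
      exact (phi_exp_form g a₀ hz).symm
    refine Tendsto.congr' this ?_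
    exact (Real.tendsto_exp_atTop.comp ((hψ.atTop_div_const two_pos))).const_mul_atTop ha₀
  -- continuity on Ici 1
  have hφcont : ContinuousOn φ (Ici (1:ℝ)) := by
    intro z hz
    have hz1 : (1:ℝ) ≤ z := hz
    have hz0 : (0:ℝ) < z := lt_of_lt_of_le one_pos hz1
    have hclog : ContinuousAt Real.log z := Real.continuousAt_log (ne_of_gt hz0)
    have hcg : ContinuousAt g z := g_continuousAt g hg_pos hg_mono hg_surj hz0
    have hrpow : ContinuousAt (fun q : ℝ × ℝ => q.1 ^ q.2) (Real.log z, g z) :=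
      Real.continuousAt_rpow _ (Or.inr (hg_pos z hz0))
    have : ContinuousAt (fun z : ℝ => (Real.log z) ^ (g z)) z :=
      ContinuousAt.comp (g := fun q : ℝ × ℝ => q.1 ^ q.2)
        (f := fun x => (Real.log x, g x)) (x := z) hrpow (hclog.prodMk hcg)
    exact (continuousAt_const.mul ((Real.continuous_sqrt.continuousAt).comp this)).continuousWithinAt
  obtain ⟨M, hMt, hM1⟩ := ((hφtop.eventually_ge_atTop t).and (eventually_ge_atTop (1:ℝ))).exists
  have hsub : Icc (1:ℝ) M ⊆ Ici 1 := Icc_subset_Ici_self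
  have := intermediate_value_Icc hM1 (hφcont.mono hsub)
  have htmem : t ∈ Icc (φ 1) (φ M) := by rw [hφ1]; exact ⟨ht, hMt⟩
  obtain ⟨m, hmmem, hmeq⟩ := this htmem
  exact ⟨m, hmmem.1, hmeq⟩

section
variable (g : ℝ → ℝ)

lemma psi_le_of_le (hg_pos : ∀ x : ℝ, 0 < x → 0 < g x)
    (hg_mono : ∀ x y : ℝ, 0 < x → x < y → g x < g y)
    {m B : ℝ} (hm1 : 1 < m) (hmB : m ≤ B) :
    g m * Real.log (Real.log m) ≤ max (g B * Real.log (Real.log B)) 0 := by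
  have hm0 : (0:ℝ) < m := lt_trans one_pos hm1
  have hLm : 0 < Real.log m := Real.log_pos hm1
  have hgm : 0 < g m := hg_pos m hm0
  have hgB : g m ≤ g B := by
    rcases eq_or_lt_of_le hmB with rfl | hlt
    · exact le_rfl
    · exact (hg_mono m B hm0 hlt).le
  rcases le_or_gt (Real.log (Real.log m)) 0 with hLL | hLL
  · exact le_trans (mul_nonpos_of_nonneg_of_nonpos hgm.le hLL) (le_max_right _ _)
  · have hLB : Real.log m ≤ Real.log B := Real.log_le_log hm0 hmB
    have hLLB : Real.log (Real.log m) ≤ Real.log (Real.log B) := Real.log_le_log hLm hLB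
    have : g m * Real.log (Real.log m) ≤ g B * Real.log (Real.log B) :=
      mul_le_mul hgB hLLB hLL.le (le_trans hgm.le hgB)
    exact le_trans this (le_max_left _ _)

lemma log_three_gt_one : (1:ℝ) < Real.log 3 := by
  rw [show (1:ℝ) = Real.log (Real.exp 1) by rw [Real.log_exp]]
  apply Real.log_lt_log (Real.exp_pos 1)
  linarith [Real.exp_one_lt_d9]

end
lemma key_asymp (g : ℝ → ℝ)
    (hg_pos : ∀ x : ℝ, 0 < x → 0 < g x)
    (hg_mono : ∀ x y : ℝ, 0 < x → x < y → g x < g y)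
    (hg_surj : ∀ y : ℝ, 0 < y → ∃ x : ℝ, 0 < x ∧ g x = y)
    (hg1 : Tendsto (fun x : ℝ => g x / Real.log (Real.log x)) atTop atTop)
    (hg3 : ∀ C : ℝ, 0 < C → ∃ X : ℝ, ∀ x y : ℝ, X ≤ x → x < y →
      C * (g y * Real.log (Real.log y) - g x * Real.log (Real.log x))
        < Real.log y - Real.log x)
    (a₀ : ℝ) (ha₀ : 1 < a₀) (h : ℝ → ℝ)
    (hh : ∀ x : ℝ, 1 ≤ x → h (a₀ * Real.sqrt ((Real.log x) ^ (g x))) = x)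
    (p : ℕ → ℝ) (hp : ∀ n : ℕ, p n = (Real.log n) ^ (g n))
    (x' : ℝ) (hx' : 0 < x') :
    Tendsto (fun n : ℕ => x' * Real.sqrt (p n)) atTop atTop ∧
    (∀ᶠ n : ℕ in atTop, 1 ≤ h (x' * Real.sqrt (p n))) ∧
    (a₀ < x' → Tendsto (fun n : ℕ => (n : ℝ) / h (x' * Real.sqrt (p n))) atTop (nhds 0)) ∧
    (x' < a₀ → Tendsto (fun n : ℕ => (n : ℝ) / h (x' * Real.sqrt (p n))) atTop atTop) := by
  have ha₀0 : (0:ℝ) < a₀ := lt_trans one_pos ha₀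
  set ψ : ℝ → ℝ := fun z => g z * Real.log (Real.log z) with hψdef
  have hψtop : Tendsto ψ atTop atTop := psi_tendsto_atTop g hg_pos hg1
  have hcast : Tendsto (fun n : ℕ => (n:ℝ)) atTop atTop := tendsto_natCast_atTop_atTop
  have hψn : Tendsto (fun n : ℕ => ψ (n:ℝ)) atTop atTop := hψtop.comp hcast
  set S : ℕ → ℝ := fun n => x' * Real.sqrt (p n) with hSdef
  set M : ℕ → ℝ := fun n => h (S n) with hMdef
  -- eventually p n = exp (ψ n)
  have hpev : ∀ᶠ n : ℕ in atTop, p n = Real.exp (ψ (n:ℝ)) := by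
    filter_upwards [eventually_gt_atTop 2] with n hn
    have hn1 : (1:ℝ) < (n:ℝ) := by exact_mod_cast Nat.lt_of_lt_of_le Nat.one_lt_two hn.le
    have hLn : 0 < Real.log (n:ℝ) := Real.log_pos hn1
    rw [hp n, Real.rpow_def_of_pos hLn, mul_comm]
  -- S is eventually x' * exp (ψ n / 2) and tends to infinity
  have hSev : ∀ᶠ n : ℕ in atTop, S n = x' * Real.exp (ψ (n:ℝ) / 2) := by
    filter_upwards [hpev] with n hn
    rw [hSdef]; simp only []
    rw [hn, ← Real.exp_half]
  have hStop : Tendsto S atTop atTop := by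
    refine Tendsto.congr' (by filter_upwards [hSev] with n hn; exact hn.symm) ?_
    exact (Real.tendsto_exp_atTop.comp (hψn.atTop_div_const two_pos)).const_mul_atTop hx'
  -- main eventual facts
  set d : ℝ := Real.log x' - Real.log a₀ with hddef
  have hfacts : ∀ᶠ n : ℕ in atTop, 1 < M n ∧ ψ (M n) = ψ (n:ℝ) + 2 * d := by
    filter_upwards [hpev, hSev, hStop.eventually_gt_atTop 0] with n hpn hSn hSpos
    obtain ⟨m, hm1, hmeq⟩ := phi_surj g hg_pos hg_mono hg_surj hg1 a₀ ha₀0 (S n)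
      (le_of_lt hSpos)
    have hMm : M n = m := by rw [hMdef]; simp only []; rw [← hmeq, hh m hm1]
    have hm1' : 1 < m := by
      rcases eq_or_lt_of_le hm1 with rfl | hlt
      · exfalso
        rw [Real.log_one, Real.zero_rpow (ne_of_gt (hg_pos 1 one_pos))] at hmeq
        simp at hmeq
        rw [← hmeq] at hSpos
        exact lt_irrefl 0 hSpos
      · exact hlt
    have hexp : a₀ * Real.exp (ψ m / 2) = x' * Real.exp (ψ (n:ℝ) / 2) := by
      rw [← hSn, ← hmeq, phi_exp_form g a₀ hm1']
    have hlog := congrArg Real.log hexp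
    rw [Real.log_mul (ne_of_gt ha₀0) (Real.exp_ne_zero _),
        Real.log_mul (ne_of_gt hx') (Real.exp_ne_zero _),
        Real.log_exp, Real.log_exp] at hlog
    refine ⟨by rw [hMm]; exact hm1', ?_⟩
    rw [hMm, hddef]; linarith
  have hMtop : Tendsto M atTop atTop := by
    rw [tendsto_atTop]
    intro B
    set B' : ℝ := max B 3 with hB'
    have : ∀ᶠ n : ℕ in atTop, B' ≤ M n := by
      filter_upwards [hfacts,
        hψn.eventually_ge_atTop (max (g B' * Real.log (Real.log B')) 0 + 1 - 2 * d)]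
        with n hf hψbig
      by_contra hcon
      push_neg at hcon
      have h2 : ψ (M n) ≤ max (g B' * Real.log (Real.log B')) 0 :=
        psi_le_of_le g hg_pos hg_mono hf.1 hcon.le
      rw [hf.2] at h2
      linarith
    filter_upwards [this] with n hn
    exact le_trans (le_max_left _ _) hn
  refine ⟨hStop, ?_, ?_, ?_⟩
  · filter_upwards [hfacts] with n hf; exact hf.1.le
  · -- case a₀ < x' : n / M n → 0
    intro hax
    have hd : 0 < d := by
      rw [hddef]; have := Real.log_lt_log ha₀0 hax; linarith
    rw [Metric.tendsto_atTop]
    intro ε hε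
    set C : ℝ := (|Real.log (1/ε)| + 1) / (2*d) with hC
    have hCpos : 0 < C := by
      apply div_pos (by positivity) (by linarith)
    obtain ⟨X, hX⟩ := hg3 C hCpos
    have hev : ∀ᶠ n : ℕ in atTop, dist ((n:ℝ)/M n) 0 < ε := by
      filter_upwards [hfacts, hcast.eventually_ge_atTop X, hcast.eventually_ge_atTop 3,
        hMtop.eventually_ge_atTop 3] with n hf hnX hn3 hM3
      have hn0 : (0:ℝ) < (n:ℝ) := by linarith
      have hM0 : (0:ℝ) < M n := by linarith
      have hMn : (n:ℝ) < M n := by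
        by_contra hcon
        push_neg at hcon
        have h1 : g (M n) ≤ g (n:ℝ) := by
          rcases eq_or_lt_of_le hcon with heq | hlt
          · rw [heq]
          · exact (hg_mono _ _ hM0 hlt).le
        have hLM : (1:ℝ) < Real.log (M n) :=
          lt_of_lt_of_le log_three_gt_one (Real.log_le_log three_pos hM3)
        have hLn : (1:ℝ) < Real.log (n:ℝ) :=
          lt_of_lt_of_le log_three_gt_one (Real.log_le_log three_pos hn3)
        have hLLM : (0:ℝ) < Real.log (Real.log (M n)) := Real.log_pos hLM
        have hLL2 : Real.log (Real.log (M n)) ≤ Real.log (Real.log (n:ℝ)) :=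
          Real.log_le_log (by linarith)
            (Real.log_le_log hM0 hcon)
        have hψle : ψ (M n) ≤ ψ (n:ℝ) :=
          mul_le_mul h1 hLL2 hLLM.le (hg_pos _ hn0).le
        rw [hf.2] at hψle
        linarith
      have key : C * (ψ (M n) - ψ (n:ℝ)) < Real.log (M n) - Real.log (n:ℝ) :=
        hX (n:ℝ) (M n) hnX hMn
      rw [hf.2] at key
      have hCd : C * (ψ (n:ℝ) + 2*d - ψ (n:ℝ)) = |Real.log (1/ε)| + 1 := by
        have he : ψ (n:ℝ) + 2*d - ψ (n:ℝ) = 2*d := by ring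
        rw [he, hC, div_mul_cancel₀ _ (by linarith : (2*d : ℝ) ≠ 0)]
      rw [hCd] at key
      have hlogdiv : Real.log (M n / (n:ℝ)) = Real.log (M n) - Real.log (n:ℝ) :=
        Real.log_div (ne_of_gt hM0) (ne_of_gt hn0)
      have hgt : Real.log (1/ε) < Real.log (M n / (n:ℝ)) := by
        rw [hlogdiv]
        calc Real.log (1/ε) ≤ |Real.log (1/ε)| := le_abs_self _
        _ < Real.log (M n) - Real.log (n:ℝ) := by linarith
      have h2 : 1/ε < M n / (n:ℝ) := by
        have := (Real.log_lt_log_iff (by positivity) (by positivity)).mp hgt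
        exact this
      rw [div_lt_div_iff₀ hε hn0] at h2
      have hfin : (n:ℝ) / M n < ε := by
        rw [div_lt_iff₀ hM0]; nlinarith
      rw [Real.dist_eq, sub_zero, abs_of_nonneg (by positivity)]
      exact hfin
    exact eventually_atTop.mp hev
  · -- case x' < a₀ : n / M n → ∞
    intro hax
    have hd : d < 0 := by
      rw [hddef]; have := Real.log_lt_log hx' hax; linarith
    rw [tendsto_atTop]
    intro K
    set K' : ℝ := max K 1 with hK'
    have hK'1 : (1:ℝ) ≤ K' := le_max_right _ _
    set C : ℝ := (Real.log K' + 1) / (-(2*d)) with hC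
    have hlogK' : 0 ≤ Real.log K' := Real.log_nonneg hK'1
    have hCpos : 0 < C := div_pos (by linarith) (by linarith)
    obtain ⟨X, hX⟩ := hg3 C hCpos
    filter_upwards [hfacts, hMtop.eventually_ge_atTop (max 3 X),
      hcast.eventually_ge_atTop 3] with n hf hMX hn3
    have hM3 : (3:ℝ) ≤ M n := le_trans (le_max_left _ _) hMX
    have hMXX : X ≤ M n := le_trans (le_max_right _ _) hMX
    have hn0 : (0:ℝ) < (n:ℝ) := by linarith
    have hM0 : (0:ℝ) < M n := by linarith
    have hMn : M n < (n:ℝ) := by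
      by_contra hcon
      push_neg at hcon
      have h1 : g (n:ℝ) ≤ g (M n) := by
        rcases eq_or_lt_of_le hcon with heq | hlt
        · rw [heq]
        · exact (hg_mono _ _ hn0 hlt).le
      have hLM : (1:ℝ) < Real.log (M n) :=
        lt_of_lt_of_le log_three_gt_one (Real.log_le_log three_pos hM3)
      have hLn : (1:ℝ) < Real.log (n:ℝ) :=
        lt_of_lt_of_le log_three_gt_one (Real.log_le_log three_pos hn3)
      have hLLn : (0:ℝ) < Real.log (Real.log (n:ℝ)) := Real.log_pos hLn
      have hLL2 : Real.log (Real.log (n:ℝ)) ≤ Real.log (Real.log (M n)) :=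
        Real.log_le_log (by linarith) (Real.log_le_log hn0 hcon)
      have hψle : ψ (n:ℝ) ≤ ψ (M n) :=
        mul_le_mul h1 hLL2 hLLn.le (hg_pos _ hM0).le
      rw [hf.2] at hψle
      linarith
    have key : C * (ψ (n:ℝ) - ψ (M n)) < Real.log (n:ℝ) - Real.log (M n) :=
      hX (M n) (n:ℝ) hMXX hMn
    rw [hf.2] at key
    have hCd : C * (ψ (n:ℝ) - (ψ (n:ℝ) + 2*d)) = Real.log K' + 1 := by
      have he : ψ (n:ℝ) - (ψ (n:ℝ) + 2*d) = -(2*d) := by ring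
      rw [he, hC, div_mul_cancel₀ _ (by linarith : (-(2*d) : ℝ) ≠ 0)]
    rw [hCd] at key
    have hlogdiv : Real.log ((n:ℝ) / M n) = Real.log (n:ℝ) - Real.log (M n) :=
      Real.log_div (ne_of_gt hn0) (ne_of_gt hM0)
    have hgt : Real.log K' < Real.log ((n:ℝ) / M n) := by
      rw [hlogdiv]; linarith
    have h2 : K' < (n:ℝ) / M n :=
      (Real.log_lt_log_iff (by linarith) (by positivity)).mp hgt
    have : K ≤ K' := le_max_left _ _
    linarith

/-- **Lemma 2.10 (3): the largest entry in the super-polynomial regime.**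
T₁ = max_{i≤j} |(Ξₙ)_{ij}| converges in probability to the constant a:
P(T₁ < x) → 0 for 0 < x < a, and P(T₁ < x) → 1 for x > a. -/
theorem max_entry_superpolynomial_sparse_wigner
    -- the sparsity exponent g : a monotone increasing bijection of (0,∞)
    (g : ℝ → ℝ)
    (hg_pos : ∀ x : ℝ, 0 < x → 0 < g x)
    (hg_mono : ∀ x y : ℝ, 0 < x → x < y → g x < g y)
    (hg_surj : ∀ y : ℝ, 0 < y → ∃ x : ℝ, 0 < x ∧ g x = y)
    (hg1 : Tendsto (fun x : ℝ => g x / Real.log (Real.log x)) atTop atTop)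
    (hg2 : Tendsto (fun x : ℝ => g x * Real.log (Real.log x) / Real.log x) atTop (nhds 0))
    (hg3 : ∀ C : ℝ, 0 < C → ∃ X : ℝ, ∀ x y : ℝ, X ≤ x → x < y →
      C * (g y * Real.log (Real.log y) - g x * Real.log (Real.log x))
        < Real.log y - Real.log x)
    -- the constant a > 1 and the function h with h(a·√((log x)^{g(x)})) = x
    (a₀ : ℝ) (ha₀ : 1 < a₀)
    (h : ℝ → ℝ)
    (hh : ∀ x : ℝ, 1 ≤ x → h (a₀ * Real.sqrt ((Real.log x) ^ (g x))) = x)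
    -- p n = (log n)^{g(n)}
    (p : ℕ → ℝ) (hp : ∀ n : ℕ, p n = (Real.log n) ^ (g n))
    {Ω : Type*} [MeasurableSpace Ω] (P : Measure Ω) [IsProbabilityMeasure P]
    (c : ℝ) (hc : 0 < c)
    -- the random variables a_{ij} and the Bernoulli variables b_{ij}
    (a b : (n : ℕ) → Fin n → Fin n → Ω → ℝ)
    (ha_meas : ∀ n (i j : Fin n), Measurable (a n i j))
    (hb_meas : ∀ n (i j : Fin n), Measurable (b n i j))
    (ha_symm : ∀ n (i j : Fin n), a n i j = a n j i)
    (hb_symm : ∀ n (i j : Fin n), b n i j = b n j i)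
    (ν : Measure ℝ) [IsProbabilityMeasure ν]
    (ha_law : ∀ n (i j : Fin n), i ≤ j → Measure.map (a n i j) P = ν)
    (hν_symm : Measure.map (fun x : ℝ => -x) ν = ν)
    (hν_mean : ∫ x, x ∂ν = 0)
    (hν_var : ∫ x, x ^ 2 ∂ν = 1)
    (hν_tail : Tendsto (fun x : ℝ => x ^ 2 * h x * (ν {y : ℝ | x < |y|}).toReal)
      atTop (nhds c))
    (hb_val : ∀ n (i j : Fin n) (ω : Ω), b n i j ω = 0 ∨ b n i j ω = 1)
    (hb_law : ∀ (n : ℕ) (i j : Fin n), i ≤ j →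
      (P {ω | b n i j ω = 1}).toReal = p n / n)
    (hindep : ∀ n : ℕ, iIndepFun
      (Sum.elim (fun (q : {q : Fin n × Fin n // q.1 ≤ q.2}) => a n q.1.1 q.1.2)
                (fun (q : {q : Fin n × Fin n // q.1 ≤ q.2}) => b n q.1.1 q.1.2)) P)
    -- the matrix Ξₙ
    (Xi : (n : ℕ) → Ω → Matrix (Fin n) (Fin n) ℝ)
    (hXi : ∀ n (ω : Ω) (i j : Fin n), Xi n ω i j = b n i j ω * a n i j ω / Real.sqrt (p n))
    :
    (∀ x : ℝ, 0 < x → x < a₀ →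
      Tendsto (fun n : ℕ =>
        (P {ω | ∀ i j : Fin n, i ≤ j → |Xi n ω i j| < x}).toReal) atTop (nhds 0))
    ∧ (∀ x : ℝ, a₀ < x →
      Tendsto (fun n : ℕ =>
        (P {ω | ∀ i j : Fin n, i ≤ j → |Xi n ω i j| < x}).toReal) atTop (nhds 1)) := by
  classical
  have hp_pos : ∀ n : ℕ, 2 ≤ n → 0 < p n := by
    intro n hn
    rw [hp]
    apply Real.rpow_pos_of_pos
    apply Real.log_pos
    exact_mod_cast Nat.lt_of_lt_of_le Nat.one_lt_two hn
  have hAmeas : ∀ s : ℝ, MeasurableSet {u : ℝ | s ≤ |u|} :=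
    fun s => (isClosed_le continuous_const continuous_abs).measurableSet
  -- event rewriting
  have hEvent : ∀ (x : ℝ), 0 < x → ∀ (n : ℕ), 2 ≤ n →
      {ω | ∀ i j : Fin n, i ≤ j → |Xi n ω i j| < x}
        = (⋃ q : {q : Fin n × Fin n // q.1 ≤ q.2},
            (a n q.1.1 q.1.2 ⁻¹' {u : ℝ | x * Real.sqrt (p n) ≤ |u|}
              ∩ b n q.1.1 q.1.2 ⁻¹' {1}))ᶜ := by
    intro x hx n hn
    have hpn := hp_pos n hn
    have hsq : 0 < Real.sqrt (p n) := Real.sqrt_pos.mpr hpn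
    ext ω
    simp only [Set.mem_setOf_eq, Set.mem_compl_iff, Set.mem_iUnion, not_exists,
      Set.mem_inter_iff, Set.mem_preimage, Set.mem_singleton_iff]
    constructor
    · rintro H ⟨⟨i, j⟩, hij⟩ ⟨hA, hb⟩
      have hlt := H i j hij
      rw [hXi n ω i j, hb, one_mul, abs_div, abs_of_pos hsq, div_lt_iff₀ hsq] at hlt
      exact absurd (show x * Real.sqrt (p n) ≤ |a n i j ω| from hA) (not_le.mpr hlt)
    · intro H i j hij
      rw [hXi n ω i j]
      rcases hb_val n i j ω with h0 | h1
      · rw [h0, zero_mul, zero_div, abs_zero]; exact hx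
      · have hq := H ⟨(i, j), hij⟩
        rw [h1, one_mul, abs_div, abs_of_pos hsq, div_lt_iff₀ hsq]
        by_contra hcon
        push_neg at hcon
        exact hq ⟨hcon, h1⟩
  -- per-entry probability
  have hProb : ∀ (x : ℝ) (n : ℕ) (q : {q : Fin n × Fin n // q.1 ≤ q.2}),
      (P (a n q.1.1 q.1.2 ⁻¹' {u : ℝ | x * Real.sqrt (p n) ≤ |u|}
          ∩ b n q.1.1 q.1.2 ⁻¹' {1})).toReal
        = (ν {u : ℝ | x * Real.sqrt (p n) ≤ |u|}).toReal * (p n / n) := by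
    intro x n q
    have hind : IndepFun (a n q.1.1 q.1.2) (b n q.1.1 q.1.2) P := by
      have := (hindep n).indepFun
        (show (Sum.inl q : _ ⊕ {q : Fin n × Fin n // q.1 ≤ q.2}) ≠ Sum.inr q by simp)
      simpa using this
    have hA := hAmeas (x * Real.sqrt (p n))
    have h1 : MeasurableSet ({1} : Set ℝ) := measurableSet_singleton 1
    rw [hind.measure_inter_preimage_eq_mul _ _ hA h1, ENNReal.toReal_mul]
    congr 1
    · rw [← ha_law n q.1.1 q.1.2 q.2, Measure.map_apply (ha_meas n _ _) hA]
    · rw [← hb_law n q.1.1 q.1.2 q.2]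
      congr 1
  -- cardinality bounds
  have hcard : ∀ n : ℕ,
      (n:ℝ)^2 ≤ 2 * (Fintype.card {q : Fin n × Fin n // q.1 ≤ q.2} : ℝ) ∧
      (Fintype.card {q : Fin n × Fin n // q.1 ≤ q.2} : ℝ) ≤ (n:ℝ)^2 := by
    intro n
    constructor
    · set f : Fin n × Fin n → {q : Fin n × Fin n // q.1 ≤ q.2} × Bool := fun q =>
        if h : q.1 ≤ q.2 then (⟨q, h⟩, true) else (⟨(q.2, q.1), le_of_not_ge h⟩, false)
      have hinj : Function.Injective f := by
        intro q q' heq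
        by_cases h1 : q.1 ≤ q.2 <;> by_cases h2 : q'.1 ≤ q'.2 <;>
          simp only [f, h1, h2, dif_pos, dif_neg, not_false_iff, Prod.mk.injEq,
            Subtype.mk.injEq] at heq
        · exact heq.1
        · exact absurd heq.2 (by simp)
        · exact absurd heq.2 (by simp)
        · obtain ⟨⟨h3, h4⟩, -⟩ := heq
          exact Prod.ext h4 h3
      have hle := Fintype.card_le_of_injective f hinj
      rw [Fintype.card_prod, Fintype.card_prod, Fintype.card_fin, Fintype.card_bool] at hle
      have : (n * n : ℕ) ≤ Fintype.card {q : Fin n × Fin n // q.1 ≤ q.2} * 2 := hle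
      push_cast [← Nat.cast_le (α := ℝ)] at this ⊢
      nlinarith
    · have hle := Fintype.card_subtype_le (fun q : Fin n × Fin n => q.1 ≤ q.2)
      rw [Fintype.card_prod, Fintype.card_fin] at hle
      have : (Fintype.card {q : Fin n × Fin n // q.1 ≤ q.2} : ℝ) ≤ (n * n : ℕ) := by
        exact_mod_cast hle
      push_cast at this
      nlinarith
  refine ⟨?_, ?_⟩
  · -- Part 1 : 0 < x < a₀, probability tends to 0
    intro x hx0 hxa
    obtain ⟨hts, hhev, -, hinf'⟩ :=
      key_asymp g hg_pos hg_mono hg_surj hg1 hg3 a₀ ha₀ h hh p hp x hx0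
    have hinf := hinf' hxa
    set m : ℕ → ℝ := fun n => h (x * Real.sqrt (p n)) with hmdef
    have hT : Tendsto (fun n : ℕ => (x * Real.sqrt (p n))^2 * m n *
        (ν {y : ℝ | x * Real.sqrt (p n) < |y|}).toReal) atTop (nhds c) := by
      have := hν_tail.comp hts
      exact this
    set S : ℕ → ℝ := fun n => (Fintype.card {q : Fin n × Fin n // q.1 ≤ q.2} : ℝ) *
        ((ν {u : ℝ | x * Real.sqrt (p n) ≤ |u|}).toReal * (p n / n)) with hSdef
    set LB : ℕ → ℝ := fun n => ((x * Real.sqrt (p n))^2 * m n *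
        (ν {y : ℝ | x * Real.sqrt (p n) < |y|}).toReal / (2*x^2)) * ((n:ℝ) / m n) with hLBdef
    have hLBtop : Tendsto LB atTop atTop :=
      Tendsto.pos_mul_atTop (by positivity : (0:ℝ) < c / (2*x^2)) (hT.div_const _) hinf
    have hSLB : ∀ᶠ n : ℕ in atTop, LB n ≤ S n := by
      filter_upwards [eventually_ge_atTop 2, hhev] with n hn2 hm1
      have hpn := hp_pos n hn2
      have hsqp : 0 < Real.sqrt (p n) := Real.sqrt_pos.mpr hpn
      have hn0 : (0:ℝ) < (n:ℝ) := by
        have : (2:ℝ) ≤ (n:ℝ) := by exact_mod_cast hn2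
        linarith
      have hm1' : (1:ℝ) ≤ m n := hm1
      have hm0 : m n ≠ 0 := by intro hcon; rw [hcon] at hm1'; linarith
      set β : ℝ := (ν {u : ℝ | x * Real.sqrt (p n) ≤ |u|}).toReal with hβ
      set βlt : ℝ := (ν {y : ℝ | x * Real.sqrt (p n) < |y|}).toReal with hβlt
      have hβmono : βlt ≤ β :=
        ENNReal.toReal_mono (measure_ne_top ν _) (measure_mono
          (fun u hu => show x * Real.sqrt (p n) ≤ |u| from le_of_lt hu))
      have hβlt0 : 0 ≤ βlt := ENNReal.toReal_nonneg
      have hsq2 : (x * Real.sqrt (p n))^2 = x^2 * p n := by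
        rw [mul_pow, Real.sq_sqrt hpn.le]
      have e1 : LB n = (n:ℝ) * (p n * βlt) / 2 := by
        rw [hLBdef]
        simp only [hsq2, ← hβlt]
        field_simp
      have hpdiv : 0 ≤ p n / (n:ℝ) := div_nonneg hpn.le hn0.le
      have e2 : ((n:ℝ)^2/2) * (βlt * (p n / n)) ≤ S n := by
        rw [hSdef]
        apply mul_le_mul (by linarith [(hcard n).1])
          (mul_le_mul_of_nonneg_right hβmono hpdiv)
          (mul_nonneg hβlt0 hpdiv) (by positivity)
      have e3 : ((n:ℝ)^2/2) * (βlt * (p n / n)) = (n:ℝ) * (p n * βlt) / 2 := by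
        field_simp
      linarith
    have hStop : Tendsto S atTop atTop := tendsto_atTop_mono' atTop hSLB hLBtop
    have hcheb : ∀ᶠ n : ℕ in atTop,
        (P {ω | ∀ i j : Fin n, i ≤ j → |Xi n ω i j| < x}).toReal ≤ 1 / S n := by
      filter_upwards [eventually_ge_atTop 2, hStop.eventually_ge_atTop 1] with n hn2 hS1
      have hSpos : 0 < S n := lt_of_lt_of_le one_pos hS1
      set E : {q : Fin n × Fin n // q.1 ≤ q.2} → Set Ω := fun q =>
        a n q.1.1 q.1.2 ⁻¹' {u : ℝ | x * Real.sqrt (p n) ≤ |u|}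
          ∩ b n q.1.1 q.1.2 ⁻¹' {1} with hEdef
      have hEm : ∀ q, MeasurableSet (E q) := fun q =>
        ((ha_meas n _ _) (hAmeas _)).inter ((hb_meas n _ _) (measurableSet_singleton _))
      set X : {q : Fin n × Fin n // q.1 ≤ q.2} → Ω → ℝ := fun q =>
        (E q).indicator (fun _ => (1:ℝ)) with hXdef
      have hX2 : ∀ q, MemLp (X q) 2 P := fun q =>
        memLp_indicator_const 2 (hEm q) 1 (Or.inr (measure_ne_top P _))
      have hXint : ∀ q, ∫ ω, X q ω ∂P = (P (E q)).toReal := by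
        intro q
        rw [hXdef]
        simp only []
        rw [integral_indicator_const (1:ℝ) (hEm q)]
        simp [smul_eq_mul]
        rfl
      set N : Ω → ℝ := fun ω => ∑ q, X q ω with hNdef
      have hN2 : MemLp N 2 P := memLp_finset_sum Finset.univ (fun q _ => hX2 q)
      have hEN : ∫ ω, N ω ∂P = S n := by
        rw [hNdef]
        rw [integral_finset_sum _ (fun q _ => (hX2 q).integrable one_le_two)]
        rw [Finset.sum_congr rfl (fun q _ => hXint q),
          Finset.sum_congr rfl (fun q _ => hProb x n q), Finset.sum_const,
          nsmul_eq_mul, Finset.card_univ, hSdef]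
      have hpair : Set.Pairwise
          ↑(Finset.univ : Finset {q : Fin n × Fin n // q.1 ≤ q.2})
          (fun q r => IndepFun (X q) (X r) P) := by
        intro q _ r _ hqr
        have hmeasSum : ∀ i : ({q : Fin n × Fin n // q.1 ≤ q.2} ⊕
            {q : Fin n × Fin n // q.1 ≤ q.2}),
            Measurable ((Sum.elim
              (fun (q' : {q : Fin n × Fin n // q.1 ≤ q.2}) => a n q'.1.1 q'.1.2)
              (fun (q' : {q : Fin n × Fin n // q.1 ≤ q.2}) => b n q'.1.1 q'.1.2)) i) := by
          rintro (q' | q')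
          · exact ha_meas n _ _
          · exact hb_meas n _ _
        have hFpair := (hindep n).indepFun_prodMk_prodMk hmeasSum
          (Sum.inl q) (Sum.inr q) (Sum.inl r) (Sum.inr r)
          (by simp [hqr]) (by simp) (by simp) (by simp [hqr])
        simp only [Sum.elim_inl, Sum.elim_inr] at hFpair
        set G : Set (ℝ × ℝ) :=
          {u : ℝ | x * Real.sqrt (p n) ≤ |u|} ×ˢ ({1} : Set ℝ) with hGdef
        have hGmeas : MeasurableSet G := (hAmeas _).prod (measurableSet_singleton 1)
        have hgE : Measurable (G.indicator (fun _ => (1:ℝ))) :=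
          measurable_const.indicator hGmeas
        have hcomp : ∀ (q' : {q : Fin n × Fin n // q.1 ≤ q.2}), X q' =
            (G.indicator (fun _ => (1:ℝ))) ∘
              (fun ω => (a n q'.1.1 q'.1.2 ω, b n q'.1.1 q'.1.2 ω)) := by
          intro q'
          funext ω
          rw [hXdef]
          simp only [Function.comp_apply, Set.indicator_apply]
          have hiff : (ω ∈ E q') ↔
              ((a n q'.1.1 q'.1.2 ω, b n q'.1.1 q'.1.2 ω) ∈ G) := by
            rw [hEdef, hGdef]
            constructor
            · rintro ⟨h1, h2⟩
              exact Set.mem_prod.mpr ⟨h1, h2⟩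
            · intro hmem
              exact ⟨(Set.mem_prod.mp hmem).1, (Set.mem_prod.mp hmem).2⟩
          exact if_congr hiff rfl rfl
        rw [hcomp q, hcomp r]
        exact hFpair.comp hgE hgE
      have hvar_le : ∀ q, variance (X q) P ≤ (P (E q)).toReal := by
        intro q
        have hsq : X q ^ 2 = X q := by
          funext ω
          rw [hXdef]
          simp only [Pi.pow_apply, Set.indicator_apply]
          by_cases hω : ω ∈ E q <;> simp [hω]
        have hv := variance_eq_sub (hX2 q)
        rw [hsq] at hv
        rw [hv]
        have hXq : P[X q] = (P (E q)).toReal := hXint q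
        rw [hXq]
        nlinarith [sq_nonneg ((P (E q)).toReal)]
      have hvarN : variance N P ≤ S n := by
        have hNs : N = ∑ q, X q := by
          funext ω
          rw [hNdef]
          simp [Finset.sum_apply]
        rw [hNs, IndepFun.variance_sum (fun q _ => hX2 q) hpair]
        calc ∑ q, variance (X q) P ≤ ∑ q, (P (E q)).toReal :=
              Finset.sum_le_sum (fun q _ => hvar_le q)
        _ = S n := by
            rw [Finset.sum_congr rfl (fun q _ => hProb x n q), Finset.sum_const,
              nsmul_eq_mul, Finset.card_univ, hSdef]
      have hchb := meas_ge_le_variance_div_sq (μ := P) hN2 hSpos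
      have hincl : {ω | ∀ i j : Fin n, i ≤ j → |Xi n ω i j| < x}
          ⊆ {ω | S n ≤ |N ω - P[N]|} := by
        intro ω hω
        rw [hEvent x hx0 n hn2] at hω
        rw [Set.mem_compl_iff, Set.mem_iUnion] at hω
        push_neg at hω
        have hNω : N ω = 0 := by
          rw [hNdef]
          apply Finset.sum_eq_zero
          intro q _
          rw [hXdef]
          exact Set.indicator_of_notMem (hω q) _
        have hPN : P[N] = S n := hEN
        rw [Set.mem_setOf_eq, hNω, hPN, zero_sub, abs_neg, abs_of_nonneg hSpos.le]
      calc (P {ω | ∀ i j : Fin n, i ≤ j → |Xi n ω i j| < x}).toReal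
          ≤ (P {ω | S n ≤ |N ω - P[N]|}).toReal :=
            ENNReal.toReal_mono (measure_ne_top P _) (measure_mono hincl)
      _ ≤ (ENNReal.ofReal (variance N P / (S n)^2)).toReal :=
            ENNReal.toReal_mono ENNReal.ofReal_ne_top hchb
      _ = variance N P / (S n)^2 :=
            ENNReal.toReal_ofReal (div_nonneg (variance_nonneg _ _) (sq_nonneg _))
      _ ≤ S n / (S n)^2 := by gcongr
      _ = 1 / S n := by
            rw [sq, div_mul_eq_div_div, div_self (ne_of_gt hSpos)]
    have hfin : Tendsto (fun n : ℕ => 1 / S n) atTop (nhds 0) := by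
      have := hStop.inv_tendsto_atTop
      simp only [one_div]
      exact this
    exact squeeze_zero' (Eventually.of_forall (fun n => ENNReal.toReal_nonneg)) hcheb hfin

  · -- Part 2 : x > a₀, probability tends to 1
    intro x hxa
    have ha₀0 : (0:ℝ) < a₀ := lt_trans one_pos ha₀
    have hx0 : 0 < x := lt_trans ha₀0 hxa
    set x' : ℝ := (a₀ + x) / 2 with hx'def
    have hx'a : a₀ < x' := by rw [hx'def]; linarith
    have hx'x : x' < x := by rw [hx'def]; linarith
    have hx'0 : 0 < x' := by linarith
    obtain ⟨hts, hhev, hzero', -⟩ :=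
      key_asymp g hg_pos hg_mono hg_surj hg1 hg3 a₀ ha₀ h hh p hp x' hx'0
    have hzero := hzero' hx'a
    set m : ℕ → ℝ := fun n => h (x' * Real.sqrt (p n)) with hmdef
    have hT : Tendsto (fun n : ℕ => (x' * Real.sqrt (p n))^2 * m n *
        (ν {y : ℝ | x' * Real.sqrt (p n) < |y|}).toReal) atTop (nhds c) := by
      have := hν_tail.comp hts
      exact this
    set bnd : ℕ → ℝ := fun n => ((x' * Real.sqrt (p n))^2 * m n *
        (ν {y : ℝ | x' * Real.sqrt (p n) < |y|}).toReal / x'^2) * ((n:ℝ) / m n) with hbnddef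
    have hbnd0 : Tendsto bnd atTop (nhds 0) := by
      have := (hT.div_const (x'^2)).mul hzero
      simpa using this
    set U : (n : ℕ) → Set Ω := fun n => ⋃ q : {q : Fin n × Fin n // q.1 ≤ q.2},
        (a n q.1.1 q.1.2 ⁻¹' {u : ℝ | x * Real.sqrt (p n) ≤ |u|}
          ∩ b n q.1.1 q.1.2 ⁻¹' {1}) with hUdef
    have hUmeas : ∀ n : ℕ, MeasurableSet (U n) := fun n =>
      MeasurableSet.iUnion fun q => ((ha_meas n _ _) (hAmeas _)).inter
        ((hb_meas n _ _) (measurableSet_singleton _))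
    have hUb : ∀ᶠ n : ℕ in atTop, (P (U n)).toReal ≤ bnd n := by
      filter_upwards [eventually_ge_atTop 2, hhev] with n hn2 hm1
      have hpn := hp_pos n hn2
      have hsqp : 0 < Real.sqrt (p n) := Real.sqrt_pos.mpr hpn
      have hn0 : (0:ℝ) < (n:ℝ) := by
        have : (2:ℝ) ≤ (n:ℝ) := by exact_mod_cast hn2
        linarith
      set β : ℝ := (ν {u : ℝ | x * Real.sqrt (p n) ≤ |u|}).toReal with hβ
      set β' : ℝ := (ν {y : ℝ | x' * Real.sqrt (p n) < |y|}).toReal with hβ'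
      have hββ' : β ≤ β' := by
        apply ENNReal.toReal_mono (measure_ne_top ν _)
        apply measure_mono
        intro u hu
        have h1 : x' * Real.sqrt (p n) < x * Real.sqrt (p n) :=
          mul_lt_mul_of_pos_right hx'x hsqp
        exact lt_of_lt_of_le h1 hu
      have hβ'0 : 0 ≤ β' := ENNReal.toReal_nonneg
      have h2 : (P (U n)).toReal ≤
          ∑ q : {q : Fin n × Fin n // q.1 ≤ q.2},
            (P (a n q.1.1 q.1.2 ⁻¹' {u : ℝ | x * Real.sqrt (p n) ≤ |u|}
              ∩ b n q.1.1 q.1.2 ⁻¹' {1})).toReal := by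
        rw [← ENNReal.toReal_sum (fun q _ => measure_ne_top P _)]
        apply ENNReal.toReal_mono
        · exact (ENNReal.sum_lt_top.mpr (fun q _ => measure_lt_top P _)).ne
        · exact measure_iUnion_fintype_le P _
      have h3 : ∑ q : {q : Fin n × Fin n // q.1 ≤ q.2},
            (P (a n q.1.1 q.1.2 ⁻¹' {u : ℝ | x * Real.sqrt (p n) ≤ |u|}
              ∩ b n q.1.1 q.1.2 ⁻¹' {1})).toReal
          = (Fintype.card {q : Fin n × Fin n // q.1 ≤ q.2} : ℝ) * (β * (p n / n)) := by
        rw [Finset.sum_congr rfl (fun q _ => hProb x n q), Finset.sum_const,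
          nsmul_eq_mul, Finset.card_univ]
      have h4 : (Fintype.card {q : Fin n × Fin n // q.1 ≤ q.2} : ℝ) * (β * (p n / n))
          ≤ (n:ℝ)^2 * (β' * (p n / n)) := by
        have hpdiv : 0 ≤ p n / (n:ℝ) := div_nonneg hpn.le hn0.le
        apply mul_le_mul (hcard n).2
        · exact mul_le_mul_of_nonneg_right hββ' hpdiv
        · exact mul_nonneg ENNReal.toReal_nonneg hpdiv
        · positivity
      have h5 : (n:ℝ)^2 * (β' * (p n / n)) = bnd n := by
        have hm1' : (1:ℝ) ≤ m n := hm1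
        have hm0 : m n ≠ 0 := by intro hcon; rw [hcon] at hm1'; linarith
        have hsq2 : (x' * Real.sqrt (p n))^2 = x'^2 * p n := by
          rw [mul_pow, Real.sq_sqrt hpn.le]
        rw [hbnddef]
        simp only [hsq2, ← hβ']
        field_simp
      linarith
    have hPUzero : Tendsto (fun n : ℕ => (P (U n)).toReal) atTop (nhds 0) :=
      squeeze_zero' (Eventually.of_forall (fun n => ENNReal.toReal_nonneg)) hUb hbnd0
    have hfinal : ∀ᶠ n : ℕ in atTop,
        1 - (P (U n)).toReal
          = (P {ω | ∀ i j : Fin n, i ≤ j → |Xi n ω i j| < x}).toReal := by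
      filter_upwards [eventually_ge_atTop 2] with n hn2
      rw [hEvent x hx0 n hn2, prob_compl_eq_one_sub (hUmeas n),
        ENNReal.toReal_sub_of_le prob_le_one ENNReal.one_ne_top, ENNReal.toReal_one]
    refine Tendsto.congr' hfinal ?_
    have := hPUzero.const_sub (1:ℝ)
    simpa using this
end

section
/- Assume kₙ/n^μ → 1 as n → ∞. Then for every x > 0, the probability P( max_{1 ≤ i ≤ j ≤ n} |(𝓜ₙ)_{ij}| ≤ x ) converges as n → ∞ to exp( −(c/2) x^{−2(1 + 1/μ)} ). -/
open MeasureTheory ProbabilityTheory Filter Matrix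



lemma count_aux {n : ℕ} (A : Matrix (Fin n) (Fin n) ℝ) (hsymm : Aᵀ = A) :
    (Finset.univ.filter fun q : Fin n × Fin n => A q.1 q.2 = 1).card
        ≤ 2 * (Finset.univ.filter fun q : Fin n × Fin n => A q.1 q.2 = 1 ∧ q.1 ≤ q.2).card ∧
    2 * (Finset.univ.filter fun q : Fin n × Fin n => A q.1 q.2 = 1 ∧ q.1 ≤ q.2).card
        ≤ (Finset.univ.filter fun q : Fin n × Fin n => A q.1 q.2 = 1).card + n := by
  have hA : ∀ i j : Fin n, A j i = A i j := by
    intro i j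
    conv_rhs => rw [← hsymm]
    rfl
  set F := Finset.univ.filter fun q : Fin n × Fin n => A q.1 q.2 = 1 with hF
  set Flo := Finset.univ.filter fun q : Fin n × Fin n => A q.1 q.2 = 1 ∧ q.1 ≤ q.2 with hFlo
  set Fhi := Finset.univ.filter fun q : Fin n × Fin n => A q.1 q.2 = 1 ∧ ¬ q.1 ≤ q.2 with hFhi
  have hsplit : Flo.card + Fhi.card = F.card := by
    rw [hF, hFlo, hFhi]
    rw [show (Finset.univ.filter fun q : Fin n × Fin n => A q.1 q.2 = 1 ∧ q.1 ≤ q.2)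
        = F.filter (fun q => q.1 ≤ q.2) by rw [Finset.filter_filter]]
    rw [show (Finset.univ.filter fun q : Fin n × Fin n => A q.1 q.2 = 1 ∧ ¬ q.1 ≤ q.2)
        = F.filter (fun q => ¬ q.1 ≤ q.2) by rw [Finset.filter_filter]]
    exact Finset.card_filter_add_card_filter_not _
  have h1 : Fhi.card ≤ Flo.card := by
    apply Finset.card_le_card_of_injOn Prod.swap
    · intro q hq
      simp only [hFhi, hFlo, Finset.mem_coe, Finset.mem_filter, Finset.mem_univ, true_and] at hq ⊢
      exact ⟨(hA q.1 q.2) ▸ hq.1, (le_of_not_ge hq.2).trans (le_refl _)⟩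
    · exact Prod.swap_injective.injOn
  have hdiag : (Flo.filter fun q => q.1 = q.2).card ≤ n := by
    calc (Flo.filter fun q => q.1 = q.2).card
        ≤ (Finset.univ : Finset (Fin n)).card := by
          apply Finset.card_le_card_of_injOn (fun q => q.1)
          · intro q _; exact Finset.mem_univ _
          · intro q hq q' hq' h
            simp only [Finset.mem_coe, Finset.mem_filter] at hq hq'
            exact Prod.ext h (hq.2 ▸ hq'.2 ▸ h)
      _ = n := Finset.card_fin n
  have hoff : (Flo.filter fun q => ¬ q.1 = q.2).card ≤ Fhi.card := by
    apply Finset.card_le_card_of_injOn Prod.swap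
    · intro q hq
      simp only [hFlo, hFhi, Finset.mem_coe, Finset.mem_filter, Finset.mem_univ, true_and] at hq ⊢
      refine ⟨(hA q.1 q.2) ▸ hq.1.1, ?_⟩
      have : q.1 < q.2 := lt_of_le_of_ne hq.1.2 hq.2
      exact not_le.mpr this
    · exact Prod.swap_injective.injOn
  have h2 : Flo.card ≤ Fhi.card + n := by
    have := (Finset.card_filter_add_card_filter_not (s := Flo)
      (p := fun q => q.1 = q.2)).symm
    omega
  omega

lemma card_sub_aux {n : ℕ} (A : Matrix (Fin n) (Fin n) ℝ) :
    (Finset.univ.filter fun q : {q : Fin n × Fin n // q.1 ≤ q.2} => A q.1.1 q.1.2 = 1).card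
      = (Finset.univ.filter fun q : Fin n × Fin n => A q.1 q.2 = 1 ∧ q.1 ≤ q.2).card := by
  apply Finset.card_bij (fun q _ => q.val)
  · intro q hq
    simp only [Finset.mem_filter, Finset.mem_univ, true_and] at hq ⊢
    exact ⟨hq, q.2⟩
  · intro q _ q' _ h
    exact Subtype.ext h
  · intro q hq
    simp only [Finset.mem_filter, Finset.mem_univ, true_and] at hq
    exact ⟨⟨q, hq.2⟩, by simp [hq.1], rfl⟩

lemma card_eq_aux {n : ℕ} (A : Matrix (Fin n) (Fin n) ℝ) (d : ℕ)
    (hval : ∀ i j : Fin n, A i j = 0 ∨ A i j = 1)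
    (hreg : ∀ i : Fin n, ∑ j : Fin n, A i j = (d : ℝ)) :
    ((Finset.univ.filter fun q : Fin n × Fin n => A q.1 q.2 = 1).card : ℝ) = (n : ℝ) * d := by
  have h1 : ((Finset.univ.filter fun q : Fin n × Fin n => A q.1 q.2 = 1).card : ℝ)
      = ∑ q : Fin n × Fin n, (if A q.1 q.2 = 1 then (1:ℝ) else 0) := by
    rw [Finset.card_filter]
    push_cast
    rfl
  rw [h1]
  have h2 : ∀ q : Fin n × Fin n, (if A q.1 q.2 = 1 then (1:ℝ) else 0) = A q.1 q.2 := by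
    intro q
    rcases hval q.1 q.2 with h | h <;> simp [h]
  rw [Finset.sum_congr rfl (fun q _ => h2 q)]
  rw [Fintype.sum_prod_type]
  simp_rw [hreg]
  simp [mul_comm]

lemma prob_aux {Ω : Type*} [MeasurableSpace Ω] (P : Measure Ω) [IsProbabilityMeasure P]
    {n : ℕ} (G : Matrix (Fin n) (Fin n) ℝ) {d : ℕ} (hd : 1 ≤ d)
    (hG_val : ∀ i j, G i j = 0 ∨ G i j = 1)
    (a : Fin n → Fin n → Ω → ℝ) (ha_meas : ∀ i j, Measurable (a i j))
    (ν : Measure ℝ) [IsProbabilityMeasure ν]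
    (ha_law : ∀ i j, i ≤ j → Measure.map (a i j) P = ν)
    (hindep : iIndepFun
      (fun q : {q : Fin n × Fin n // q.1 ≤ q.2} => a q.1.1 q.1.2) P)
    (M : Ω → Matrix (Fin n) (Fin n) ℝ)
    (hM : ∀ ω i j, M ω i j = G i j * a i j ω / Real.sqrt d)
    (x : ℝ) (hx : 0 < x) :
    (P {ω | ∀ i j : Fin n, i ≤ j → |M ω i j| ≤ x}).toReal
      = (1 - (ν {y : ℝ | x * Real.sqrt d < |y|}).toReal) ^
        (Finset.univ.filter
          fun q : {q : Fin n × Fin n // q.1 ≤ q.2} => G q.1.1 q.1.2 = 1).card := by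
  have hd0 : (0:ℝ) < Real.sqrt d := Real.sqrt_pos.2 (by exact_mod_cast hd)
  set B : Set ℝ := {y | |y| ≤ x * Real.sqrt d} with hBdef
  have hB : MeasurableSet B := measurableSet_le (measurable_abs) measurable_const
  set S := Finset.univ.filter
    (fun q : {q : Fin n × Fin n // q.1 ≤ q.2} => G q.1.1 q.1.2 = 1) with hSdef
  have hset : {ω | ∀ i j : Fin n, i ≤ j → |M ω i j| ≤ x}
      = ⋂ q ∈ S, (a q.1.1 q.1.2) ⁻¹' B := by
    ext ω
    simp only [Set.mem_setOf_eq, Set.mem_iInter, Set.mem_preimage, hSdef,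
      Finset.mem_filter, Finset.mem_univ, true_and, hBdef]
    constructor
    · intro h q hq
      have h2 := h q.1.1 q.1.2 q.2
      rw [hM, hq, one_mul] at h2
      rw [abs_div, abs_of_pos hd0, div_le_iff₀ hd0] at h2
      exact h2
    · intro h i j hij
      rcases hG_val i j with h0 | h1
      · rw [hM, h0, zero_mul, zero_div, abs_zero]
        exact hx.le
      · have h2 := h ⟨(i, j), hij⟩ h1
        rw [hM, h1, one_mul, abs_div, abs_of_pos hd0, div_le_iff₀ hd0]
        exact h2
  have hprod : P {ω | ∀ i j : Fin n, i ≤ j → |M ω i j| ≤ x}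
      = (ν B) ^ S.card := by
    rw [hset, hindep.measure_inter_preimage_eq_mul S (fun _ _ => hB)]
    have : ∀ q ∈ S, P ((a q.1.1 q.1.2) ⁻¹' B) = ν B := by
      intro q _
      rw [← ha_law q.1.1 q.1.2 q.2, Measure.map_apply (ha_meas _ _) hB]
    rw [Finset.prod_congr rfl this, Finset.prod_const]
  rw [hprod, ENNReal.toReal_pow]
  congr 1
  have hcompl : Bᶜ = {y : ℝ | x * Real.sqrt d < |y|} := by
    ext y; simp [hBdef, not_le]
  have h1 : ν B = 1 - ν Bᶜ := by
    have := prob_compl_eq_one_sub (μ := ν) hB.compl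
    rw [compl_compl] at this
    exact this
  rw [h1, hcompl, ENNReal.toReal_sub_of_le prob_le_one ENNReal.one_ne_top, ENNReal.toReal_one]

lemma pow_tendsto_exp {p : ℕ → ℝ} {m : ℕ → ℕ} {L : ℝ}
    (hp0 : Tendsto p atTop (nhds 0))
    (hppos : ∀ᶠ n in atTop, 0 < p n)
    (hmp : Tendsto (fun n => (m n : ℝ) * p n) atTop (nhds L)) :
    Tendsto (fun n => (1 - p n) ^ (m n)) atTop (nhds (Real.exp (-L))) := by
  have hp1 : ∀ᶠ n in atTop, p n < 1 := hp0.eventually (eventually_lt_nhds one_pos)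
  -- slope of log(1 - y) at 0
  have hderiv : HasDerivAt (fun y : ℝ => Real.log (1 - y)) (-1) 0 := by
    have h := (Real.hasDerivAt_log (by norm_num : (1:ℝ) - 0 ≠ 0)).comp 0
      ((hasDerivAt_const 0 (1:ℝ)).sub (hasDerivAt_id 0))
    simp at h
    exact h
  have hslope := hasDerivAt_iff_tendsto_slope.mp hderiv
  have hp_to : Tendsto p atTop (nhdsWithin 0 {0}ᶜ) := by
    rw [tendsto_nhdsWithin_iff]
    exact ⟨hp0, hppos.mono fun n h => by simpa using h.ne'⟩
  have hg : Tendsto (fun n => Real.log (1 - p n) / p n) atTop (nhds (-1)) := by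
    have h := hslope.comp hp_to
    apply h.congr
    intro n
    simp [slope_def_field]
  have hml : Tendsto (fun n => (m n : ℝ) * Real.log (1 - p n)) atTop (nhds (-L)) := by
    have h := hmp.mul hg
    rw [mul_neg_one] at h
    apply h.congr' (hppos.mono ?_)
    intro n hn
    field_simp
  have h := (Real.continuous_exp.tendsto _).comp hml
  apply h.congr' ((hppos.and hp1).mono ?_)
  intro n ⟨_, hn1⟩
  have h1p : (0:ℝ) < 1 - p n := by linarith
  show Real.exp ((m n : ℝ) * Real.log (1 - p n)) = (1 - p n) ^ (m n)
  rw [Real.exp_nat_mul, Real.exp_log h1p]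

/-- **Lemma 3.2 (last part): the largest entry of a weighted regular graph.**
If dₙ/n^μ → 1 then for every x > 0, P(max_{i≤j} |(𝓜ₙ)_{ij}| ≤ x) → exp(−(c/2)·x^{−2(1+1/μ)}). -/
theorem weighted_regular_graph_max_entry_frechet
    {Ω : Type*} [MeasurableSpace Ω] (P : Measure Ω) [IsProbabilityMeasure P]
    (μ c : ℝ) (hμ0 : 0 < μ) (hμ1 : μ ≤ 1) (hc : 0 < c)
    -- dₙ-regular graphs (allowing self loops), with dₙ/n^μ → 1
    (d : ℕ → ℕ)
    (G : (n : ℕ) → Matrix (Fin n) (Fin n) ℝ)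
    (hG_val : ∀ n (i j : Fin n), G n i j = 0 ∨ G n i j = 1)
    (hG_symm : ∀ n, (G n)ᵀ = G n)
    (hG_reg : ∀ n (i : Fin n), ∑ j : Fin n, G n i j = (d n : ℝ))
    (hd_rate : Tendsto (fun n : ℕ => (d n : ℝ) / (n : ℝ) ^ μ) atTop (nhds 1))
    -- the i.i.d. weights a_{ij}
    (a : (n : ℕ) → Fin n → Fin n → Ω → ℝ)
    (ha_meas : ∀ n (i j : Fin n), Measurable (a n i j))
    (ha_symm : ∀ n (i j : Fin n), a n i j = a n j i)
    (ν : Measure ℝ) [IsProbabilityMeasure ν]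
    (ha_law : ∀ n (i j : Fin n), i ≤ j → Measure.map (a n i j) P = ν)
    (hν_mean : ∫ x, x ∂ν = 0)
    (hν_var : ∫ x, x ^ 2 ∂ν = 1)
    (hν_tail : Tendsto (fun x : ℝ => x ^ (2 * (1 + 1 / μ)) * (ν {y : ℝ | x < |y|}).toReal)
      atTop (nhds c))
    (hindep : ∀ n : ℕ, iIndepFun
      (fun (q : {q : Fin n × Fin n // q.1 ≤ q.2}) => a n q.1.1 q.1.2) P)
    -- the weighted adjacency matrix 𝓜ₙ
    (M : (n : ℕ) → Ω → Matrix (Fin n) (Fin n) ℝ)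
    (hM : ∀ n (ω : Ω) (i j : Fin n),
      M n ω i j = G n i j * a n i j ω / Real.sqrt (d n))
    :
    ∀ x : ℝ, 0 < x →
      Tendsto (fun n : ℕ =>
        (P {ω | ∀ i j : Fin n, i ≤ j → |M n ω i j| ≤ x}).toReal)
        atTop (nhds (Real.exp (-(c / 2) * x ^ (-(2 * (1 + 1 / μ)))))) := by
  intro x hx
  have hμne : μ ≠ 0 := hμ0.ne'
  have hβpos : (0:ℝ) < 1 + 1/μ := by positivity
  set α : ℝ := 2 * (1 + 1 / μ) with hαdef
  have hαpos : 0 < α := by rw [hαdef]; positivity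
  set t : ℕ → ℝ := fun n => x * Real.sqrt (d n) with htdef
  set p : ℕ → ℝ := fun n => (ν {y : ℝ | t n < |y|}).toReal with hpdef
  set m : ℕ → ℕ := fun n => (Finset.univ.filter
    (fun q : {q : Fin n × Fin n // q.1 ≤ q.2} => G n q.1.1 q.1.2 = 1)).card with hmdef
  -- d n → ∞
  have hnμ : Tendsto (fun n : ℕ => ((n:ℝ)) ^ μ) atTop atTop :=
    (tendsto_rpow_atTop hμ0).comp tendsto_natCast_atTop_atTop
  have hd_top : Tendsto (fun n => (d n : ℝ)) atTop atTop := by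
    apply tendsto_atTop_mono' atTop (f₁ := fun n : ℕ => (n:ℝ)^μ / 2)
    · filter_upwards [hd_rate.eventually (eventually_gt_nhds (by norm_num : (1:ℝ)/2 < 1)),
        eventually_ge_atTop 1] with n h1 h2
      have hn : (0:ℝ) < (n:ℝ)^μ := Real.rpow_pos_of_pos (by exact_mod_cast h2) μ
      rw [lt_div_iff₀ hn] at h1
      linarith
    · exact hnμ.atTop_div_const two_pos
  have hd1 : ∀ᶠ n in atTop, 1 ≤ d n := by
    filter_upwards [hd_top.eventually (eventually_ge_atTop 1)] with n h
    exact_mod_cast h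
  have hsq : Tendsto (fun n => Real.sqrt (d n)) atTop atTop := by
    have := (tendsto_rpow_atTop (by norm_num : (0:ℝ) < 1/2)).comp hd_top
    apply this.congr
    intro n
    exact (Real.sqrt_eq_rpow _).symm
  have ht_top : Tendsto t atTop atTop := hsq.const_mul_atTop hx
  have ht_pos : ∀ᶠ n in atTop, 0 < t n := ht_top.eventually (eventually_gt_atTop 0)
  -- tail limit along t
  have hq : Tendsto (fun n => t n ^ α * p n) atTop (nhds c) := hν_tail.comp ht_top
  have hp0 : Tendsto p atTop (nhds 0) := by
    have h1 : Tendsto (fun n => t n ^ (-α)) atTop (nhds 0) :=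
      (tendsto_rpow_neg_atTop hαpos).comp ht_top
    have h2 := hq.mul h1
    rw [mul_zero] at h2
    apply h2.congr' (ht_pos.mono ?_)
    intro n hn
    have : t n ^ α * p n * t n ^ (-α) = p n * (t n ^ α * t n ^ (-α)) := by ring
    rw [this, ← Real.rpow_add hn, add_neg_cancel, Real.rpow_zero, mul_one]
  have hppos : ∀ᶠ n in atTop, 0 < p n := by
    filter_upwards [hq.eventually (eventually_gt_nhds hc), ht_pos] with n h1 h2
    by_contra h
    push_neg at h
    have : t n ^ α * p n ≤ 0 :=
      mul_nonpos_iff.mpr (Or.inl ⟨(Real.rpow_pos_of_pos h2 α).le, h⟩)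
    linarith
  -- n * d^{-1/μ} → 1
  have hN1 : Tendsto (fun n : ℕ => (n:ℝ) * (d n:ℝ) ^ (-(1/μ):ℝ)) atTop (nhds 1) := by
    have h0 : Tendsto (fun n : ℕ => ((d n:ℝ) / (n:ℝ)^μ) ^ ((1:ℝ)/μ)) atTop (nhds 1) := by
      have := hd_rate.rpow_const (p := 1/μ) (Or.inr (by positivity))
      simpa using this
    have h1 : Tendsto (fun n : ℕ => (d n:ℝ) ^ ((1:ℝ)/μ) / (n:ℝ)) atTop (nhds 1) := by
      apply h0.congr'
      filter_upwards [eventually_ge_atTop 1] with n hn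
      have hn0 : (0:ℝ) < (n:ℝ) := by exact_mod_cast hn
      rw [Real.div_rpow (by positivity) (by positivity),
        ← Real.rpow_mul hn0.le, mul_one_div_cancel hμne, Real.rpow_one]
    have h2 := h1.inv₀ one_ne_zero
    rw [inv_one] at h2
    apply h2.congr'
    filter_upwards [hd1, eventually_ge_atTop 1] with n hdn hn
    have hd0 : (0:ℝ) < (d n:ℝ) := by exact_mod_cast hdn
    rw [inv_div, div_eq_mul_inv, Real.rpow_neg hd0.le]
  -- 2 m d^{-(1+1/μ)} → 1
  have hm2 : Tendsto (fun n => 2 * (m n:ℝ) * (d n:ℝ) ^ (-(1+1/μ):ℝ)) atTop (nhds 1) := by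
    have hlo : Tendsto (fun n : ℕ => (n:ℝ) * (d n:ℝ) * (d n:ℝ) ^ (-(1+1/μ):ℝ))
        atTop (nhds 1) := by
      apply hN1.congr'
      filter_upwards [hd1] with n hdn
      have hd0 : (0:ℝ) < (d n:ℝ) := by exact_mod_cast hdn
      rw [mul_assoc]
      congr 1
      rw [show (-(1/μ):ℝ) = 1 + -(1+1/μ) by ring, Real.rpow_add hd0, Real.rpow_one]
    have hz : Tendsto (fun n : ℕ => (n:ℝ) * (d n:ℝ) ^ (-(1+1/μ):ℝ)) atTop (nhds 0) := by
      have h := hN1.mul (tendsto_inv_atTop_zero.comp hd_top)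
      rw [mul_zero] at h
      apply h.congr'
      filter_upwards [hd1] with n hdn
      have hd0 : (0:ℝ) < (d n:ℝ) := by exact_mod_cast hdn
      rw [mul_assoc]
      congr 1
      show (d n:ℝ) ^ (-(1/μ):ℝ) * ((d n:ℝ))⁻¹ = _
      rw [show (-(1+1/μ):ℝ) = -(1/μ) + (-1) by ring, Real.rpow_add hd0, Real.rpow_neg_one]
    have hup : Tendsto (fun n : ℕ => ((n:ℝ) * (d n:ℝ) + (n:ℝ)) * (d n:ℝ) ^ (-(1+1/μ):ℝ))
        atTop (nhds 1) := by
      have h := hlo.add hz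
      rw [add_zero] at h
      apply h.congr
      intro n
      ring
    apply tendsto_of_tendsto_of_tendsto_of_le_of_le' hlo hup
    · filter_upwards [hd1] with n hdn
      have hkey : (n:ℝ) * (d n : ℝ) ≤ 2 * (m n : ℝ) := by
        have h1 := (count_aux (G n) (hG_symm n)).1
        have h2 := card_sub_aux (G n)
        have h3 := card_eq_aux (G n) (d n) (hG_val n) (hG_reg n)
        rw [← h3, hmdef]
        push_cast
        rw [h2]
        exact_mod_cast h1
      exact mul_le_mul_of_nonneg_right hkey (Real.rpow_nonneg (by positivity) _)
    · filter_upwards [hd1] with n hdn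
      have hkey : 2 * (m n : ℝ) ≤ (n:ℝ) * (d n : ℝ) + (n:ℝ) := by
        have h1 := (count_aux (G n) (hG_symm n)).2
        have h2 := card_sub_aux (G n)
        have h3 := card_eq_aux (G n) (d n) (hG_val n) (hG_reg n)
        rw [← h3, hmdef]
        push_cast
        rw [h2]
        exact_mod_cast h1
      exact mul_le_mul_of_nonneg_right hkey (Real.rpow_nonneg (by positivity) _)
  -- m p → c/2 * x^{-α}
  have hmp : Tendsto (fun n => (m n:ℝ) * p n) atTop (nhds (c / 2 * x ^ (-α))) := by
    have h := (hm2.mul hq).mul_const (x ^ (-α) / 2)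
    rw [one_mul] at h
    have hval : c * (x ^ (-α) / 2) = c / 2 * x ^ (-α) := by ring
    rw [hval] at h
    apply h.congr'
    filter_upwards [hd1] with n hdn
    have hd0 : (0:ℝ) < (d n:ℝ) := by exact_mod_cast hdn
    have htα : t n ^ α = x ^ α * (d n:ℝ) ^ ((1:ℝ)+1/μ) := by
      rw [htdef]
      show (x * Real.sqrt (d n)) ^ α = _
      rw [Real.sqrt_eq_rpow, Real.mul_rpow hx.le (Real.rpow_nonneg hd0.le _),
        ← Real.rpow_mul hd0.le]
      congr 1
      rw [hαdef]; ring
    have e1 : (d n:ℝ) ^ (-(1+1/μ):ℝ) * (d n:ℝ) ^ ((1:ℝ)+1/μ) = 1 := by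
      rw [← Real.rpow_add hd0, show (-(1+1/μ) + ((1:ℝ)+1/μ)) = 0 by ring, Real.rpow_zero]
    have e2 : x ^ α * x ^ (-α) = 1 := by
      rw [← Real.rpow_add hx]
      simp
    calc 2 * (m n:ℝ) * (d n:ℝ) ^ (-(1+1/μ):ℝ) * (t n ^ α * p n) * (x ^ (-α) / 2)
        = 2 * (m n:ℝ) * (d n:ℝ) ^ (-(1+1/μ):ℝ) *
            (x ^ α * (d n:ℝ) ^ ((1:ℝ)+1/μ) * p n) * (x ^ (-α) / 2) := by rw [htα]
      _ = (m n:ℝ) * p n *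
            (((d n:ℝ) ^ (-(1+1/μ):ℝ) * (d n:ℝ) ^ ((1:ℝ)+1/μ)) * (x ^ α * x ^ (-α))) := by
          ring
      _ = (m n:ℝ) * p n := by rw [e1, e2]; ring
  -- conclude
  have hfinal := pow_tendsto_exp hp0 hppos hmp
  have hval : -(c / 2) * x ^ (-α) = -(c / 2 * x ^ (-α)) := by ring
  rw [hval]
  apply hfinal.congr'
  filter_upwards [hd1] with n hdn
  exact (prob_aux P (G n) hdn (hG_val n) (a n) (ha_meas n) ν (ha_law n) (hindep n)
    (M n) (hM n) x hx).symm
end
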